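/- arXiv:2009.10536 — 7 statements merged into one kernel-verified Lean document; each statement's English description precedes it below -/
import Mathlib

section
/- Let h be a proper lsc sublinear function on ℝⁿ with h = σ_D, the support function of a closed convex set D. If D is polyhedral (h piecewise linear), then for every x ∈ (D^∞)* with F_{D,x} ≠ ∅, the excess e(F_{D,x}, F_{D^∞,x}) := sup_{v ∈ F_{D,x}} dist(v, F_{D^∞,x}) is finite, where F_{D,x} = argmax_{v ∈ D}⟨v, x⟩ and F_{D^∞,x} = argmax_{v ∈ D^∞}⟨v, x⟩. -/
open Filter Metric Set
open scoped Topology RealInnerProductSpace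

noncomputable section

abbrev Eu (n : ℕ) := EuclideanSpace ℝ (Fin n)

section GeneralDefs

variable {E F : Type*} [NormedAddCommGroup E] [NormedSpace ℝ E]
  [NormedAddCommGroup F] [NormedSpace ℝ F]

/-- `v` is a proximal normal vector to `A` at `a`: for some `t > 0`,
`a` is a nearest point of `A` to `a + t • v`. -/
def proxNormal (A : Set E) (a : E) : Set E :=
  {v | ∃ t : ℝ, 0 < t ∧ ‖t • v‖ = Metric.infDist (a + t • v) A}

/-- the set of nearest points of `K` to `x` (metric projection). -/
def projSet (K : Set E) (x : E) : Set E :=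
  {y | y ∈ K ∧ ∀ z ∈ K, ‖x - y‖ ≤ ‖x - z‖}

/-- the contingent (tangent) cone to `X` at `x`. -/
def tangCone (X : Set E) (x : E) : Set E :=
  {w | ∃ (t : ℕ → ℝ) (v : ℕ → E), (∀ k, 0 < t k) ∧ Tendsto t atTop (𝓝 0) ∧
    Tendsto v atTop (𝓝 w) ∧ ∀ k, x + t k • v k ∈ X}

/-- `A` is locally closed at `a`. -/
def LocallyClosedAt (A : Set E) (a : E) : Prop := ∃ U ∈ 𝓝 a, IsClosed (A ∩ U)

/-- the graph of the restriction `S|_X`. -/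
def svGraph (S : E → Set F) (X : Set E) : Set (E × F) := {p | p.1 ∈ X ∧ p.2 ∈ S p.1}

/-- the Lipschitz-like property of `S` relative to `X` at `x₀` for `u₀` with constant `κ`. -/
def LipschitzLikeRel (S : E → Set F) (X : Set E) (x₀ : E) (u₀ : F) (κ : ℝ) : Prop :=
  LocallyClosedAt (svGraph S univ) (x₀, u₀) ∧
  ∃ V ∈ 𝓝 x₀, ∃ W ∈ 𝓝 u₀, ∀ x ∈ X ∩ V, ∀ x' ∈ X ∩ V, ∀ u ∈ S x' ∩ W,
    ∃ u'' ∈ S x, ‖u - u''‖ ≤ κ * ‖x' - x‖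

/-- the graphical modulus of `S` relative to `X` at `x₀` for `u₀` (as an extended real,
the infimum of all Lipschitz-like constants). -/
def gmod (S : E → Set F) (X : Set E) (x₀ : E) (u₀ : F) : EReal :=
  sInf {c : EReal | ∃ κ : ℝ, 0 ≤ κ ∧ c = (κ : EReal) ∧
    ∃ V ∈ 𝓝 x₀, ∃ W ∈ 𝓝 u₀, ∀ x ∈ X ∩ V, ∀ x' ∈ X ∩ V, ∀ u ∈ S x' ∩ W,
      ∃ u'' ∈ S x, ‖u - u''‖ ≤ κ * ‖x' - x‖}

/-- the horizon cone of `A`. -/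
def horizonCone (A : Set E) : Set E :=
  {w | ∃ (a : ℕ → E) (l : ℕ → ℝ), (∀ k, a k ∈ A) ∧ (∀ k, 0 < l k) ∧
    Tendsto l atTop (𝓝 0) ∧ Tendsto (fun k => l k • a k) atTop (𝓝 w)}

/-- extended-real absolute difference `|a - b|`. -/
def eabsdiff (a b : EReal) : EReal := max (a - b) (b - a)

/-- `f` is locally Lipschitz continuous at `x₀` relative to `X`. -/
def RelLipschitzAt (f : E → EReal) (X : Set E) (x₀ : E) : Prop :=
  ∃ κ : ℝ, 0 ≤ κ ∧ ∃ V ∈ 𝓝 x₀, ∀ x ∈ X ∩ V, ∀ y ∈ X ∩ V,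
    eabsdiff (f x) (f y) ≤ ((κ * ‖x - y‖ : ℝ) : EReal)

/-- the Lipschitz modulus of `f` at `x₀` relative to `X` (as an extended real). -/
def relLipMod (f : E → EReal) (X : Set E) (x₀ : E) : EReal :=
  sInf {c : EReal | ∃ κ : ℝ, 0 ≤ κ ∧ c = (κ : EReal) ∧ ∃ V ∈ 𝓝 x₀,
    ∀ x ∈ X ∩ V, ∀ y ∈ X ∩ V, eabsdiff (f x) (f y) ≤ ((κ * ‖x - y‖ : ℝ) : EReal)}

end GeneralDefs

section InnerDefs

variable {E F : Type*} [NormedAddCommGroup E] [InnerProductSpace ℝ E]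
  [NormedAddCommGroup F] [InnerProductSpace ℝ F]

/-- the regular (Fréchet) normal cone to `A ⊆ E × F` at `a`. -/
def regNormalP (A : Set (E × F)) (a : E × F) : Set (E × F) :=
  {v | ∀ ε : ℝ, 0 < ε → ∃ δ > 0, ∀ b ∈ A, ‖b - a‖ ≤ δ →
    ⟪v.1, b.1 - a.1⟫ + ⟪v.2, b.2 - a.2⟫ ≤ ε * ‖b - a‖}

/-- the limiting (Mordukhovich) normal cone to `A ⊆ E × F` at `a`. -/
def limNormalP (A : Set (E × F)) (a : E × F) : Set (E × F) :=
  {v | ∃ (b : ℕ → E × F) (w : ℕ → E × F), (∀ k, b k ∈ A) ∧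
    (∀ k, w k ∈ regNormalP A (b k)) ∧ Tendsto b atTop (𝓝 a) ∧ Tendsto w atTop (𝓝 v)}

/-- the limiting coderivative of `S` at `x` for `u`:
`xs ∈ coderiv S x u us ↔ (xs, -us) ∈ N_{graph S}(x, u)`. -/
def coderiv (S : E → Set F) (x : E) (u : F) (us : F) : Set E :=
  {xs | (xs, -us) ∈ limNormalP (svGraph S univ) (x, u)}

/-- the projectional coderivative of `S` at `x₀` for `u₀` with respect to `X`. -/
def projCoderiv (S : E → Set F) (X : Set E) (x₀ : E) (u₀ : F) (us : F) : Set E :=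
  {xs | ∃ (x : ℕ → E) (u : ℕ → F) (xv : ℕ → E) (uv : ℕ → F) (y : ℕ → E),
    (∀ k, (x k, u k) ∈ svGraph S X) ∧
    (∀ k, (xv k, -(uv k)) ∈ limNormalP (svGraph S X) (x k, u k)) ∧
    (∀ k, y k ∈ projSet (tangCone X (x k)) (xv k)) ∧
    Tendsto x atTop (𝓝 x₀) ∧ Tendsto u atTop (𝓝 u₀) ∧
    Tendsto uv atTop (𝓝 us) ∧ Tendsto y atTop (𝓝 xs)}

/-- the regular (Fréchet) subdifferential of an extended-real-valued function. -/
def regSubdiff (g : E → EReal) (x : E) : Set E :=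
  {v | ∀ ε : ℝ, 0 < ε → ∃ δ > 0, ∀ y, ‖y - x‖ ≤ δ →
    g x + ((⟪v, y - x⟫ - ε * ‖y - x‖ : ℝ) : EReal) ≤ g y}

/-- the limiting (Mordukhovich) subdifferential. -/
def limSubdiff (g : E → EReal) (x : E) : Set E :=
  {v | ∃ (xk vk : ℕ → E), Tendsto xk atTop (𝓝 x) ∧
    Tendsto (fun k => g (xk k)) atTop (𝓝 (g x)) ∧
    (∀ k, vk k ∈ regSubdiff g (xk k)) ∧ Tendsto vk atTop (𝓝 v)}

/-- the horizon (singular) subdifferential. -/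
def horizonSubdiff (g : E → EReal) (x : E) : Set E :=
  {v | ∃ (xk vk : ℕ → E) (lk : ℕ → ℝ), Tendsto xk atTop (𝓝 x) ∧
    Tendsto (fun k => g (xk k)) atTop (𝓝 (g x)) ∧ (∀ k, 0 < lk k) ∧
    Tendsto lk atTop (𝓝 0) ∧ (∀ k, vk k ∈ regSubdiff g (xk k)) ∧
    Tendsto (fun k => lk k • vk k) atTop (𝓝 v)}

/-- the outer limiting subdifferential of `g` at `xb` with respect to `vb`. -/
def outerSubdiffWrt (g : E → EReal) (xb vb : E) : Set E :=
  {v | ∃ (xk vk : ℕ → E), Tendsto xk atTop (𝓝 xb) ∧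
    Tendsto (fun k => g (xk k)) atTop (𝓝 (g xb)) ∧
    (∀ k, g xb + ((⟪vb, xk k - xb⟫ : ℝ) : EReal) < g (xk k)) ∧
    (∀ k, vk k ∈ limSubdiff g (xk k)) ∧ Tendsto vk atTop (𝓝 v)}

/-- `D` is a convex polyhedron (finite intersection of closed half-spaces). -/
def IsPolyhedral (D : Set E) : Prop :=
  ∃ s : Finset (E × ℝ), D = {v | ∀ p ∈ s, ⟪p.1, v⟫ ≤ p.2}

/-- the support function of `D`. -/
def supportFn (D : Set E) : E → EReal :=
  fun x => sSup ((fun v => ((⟪v, x⟫ : ℝ) : EReal)) '' D)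

end InnerDefs

/-! The face `F_{D,x} = D ∩ {v | ⟪x, v⟫ ≥ max_D ⟪·, x⟫}` is again a polyhedron, so every point of
it is `b + q` with `‖b‖` uniformly bounded and `q` in the recession cone of the face. Such a `q` is a
recession direction of `D` with `⟪q, x⟫ ≥ 0`, hence `⟪q, x⟫ = 0` since `x ∈ (D^∞)*`, so
`q ∈ F_{D^∞,x}` and the distance from `b + q` to `F_{D^∞,x}` is at most `‖b‖`.

The decomposition comes from Minkowski's theorem (a cone cut out by finitely many linear
inequalities is finitely generated, proved by Fourier–Motzkin elimination) applied to the
homogenization `{(v, t) | 0 ≤ t, ⟪a, v⟫ ≤ β t}` of the polyhedron: the generators with `t > 0`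
contribute the bounded part, those with `t = 0` the recession part. -/

namespace PointedCone

section OrderedRing

variable {R E : Type*} [CommRing R] [AddCommGroup E] [Module R E]

def eliminate (φ : E →ₗ[R] R) : E →ₗ[R] E →ₗ[R] E :=
  LinearMap.mk₂ R (fun u w => φ u • w - φ w • u)
    (fun _ _ _ => by simp only [map_add]; module)
    (fun _ _ _ => by simp only [map_smul, smul_eq_mul]; module)
    (fun _ _ _ => by simp only [map_add]; module)
    (fun _ _ _ => by simp only [map_smul, smul_eq_mul]; module)

@[simp] lemma eliminate_apply (φ : E →ₗ[R] R) (u w : E) :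
    eliminate φ u w = φ u • w - φ w • u := rfl

variable [LinearOrder R]

def fourierMotzkin (φ : E →ₗ[R] R) (W : Set E) : Set E :=
  {w ∈ W | 0 ≤ φ w} ∪ image2 (fun u w => eliminate φ u w) {u ∈ W | 0 ≤ φ u} {w ∈ W | φ w < 0}

lemma finite_fourierMotzkin (φ : E →ₗ[R] R) {W : Set E} (hW : W.Finite) :
    (fourierMotzkin φ W).Finite :=
  (hW.sep _).union ((hW.sep _).image2 _ (hW.sep _))

variable [IsStrictOrderedRing R]

lemma exists_add_of_mem_hull {W : Set E} {p q : E → Prop} (hpq : ∀ w, p w ∨ q w) {y : E}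
    (hy : y ∈ hull R W) :
    ∃ a ∈ hull R {w ∈ W | p w}, ∃ b ∈ hull R {w ∈ W | q w}, a + b = y := by
  rwa [← Submodule.mem_sup, hull, ← Submodule.span_union, ← sep_or,
    sep_eq_self_iff_mem_true.2 fun w _ => hpq w]

lemma apply_nonneg_of_mem_hull {φ : E →ₗ[R] R} {s : Set E} (hs : ∀ x ∈ s, 0 ≤ φ x)
    {y : E} (hy : y ∈ hull R s) : 0 ≤ φ y := by
  have hle : hull R s ≤ dual (LinearMap.id : Module.Dual R E →ₗ[R] _) {φ} :=
    Submodule.span_le.2 fun x hx => by simpa using hs x hx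
  simpa using hle hy

lemma apply_neg_or_eq_zero_of_mem_hull {φ : E →ₗ[R] R} {s : Set E} (hs : ∀ x ∈ s, φ x < 0)
    {y : E} (hy : y ∈ hull R s) : φ y < 0 ∨ y = 0 := by
  induction hy using Submodule.span_induction with
  | mem x hx => exact .inl (hs x hx)
  | zero => exact .inr rfl
  | add x y _ _ hx hy =>
    rcases hx with hx | rfl
    · rcases hy with hy | rfl
      · exact .inl (by rw [map_add]; linarith)
      · simpa using Or.inl hx
    · simpa using hy
  | smul c x _ hx =>
    rcases hx with hx | rfl
    · rw [← Nonneg.coe_smul, map_smul, smul_eq_mul]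
      rcases c.2.lt_or_eq with hc | hc
      · exact .inl (mul_neg_of_pos_of_neg hc hx)
      · exact .inr (by rw [← hc, zero_smul])
    · simp

lemma eliminate_mem_hull_image2 (φ : E →ₗ[R] R) {s t : Set E} {u w : E} (hu : u ∈ hull R s)
    (hw : w ∈ hull R t) :
    eliminate φ u w ∈ hull R (image2 (fun u w => eliminate φ u w) s t) := by
  let B := (eliminate φ).restrictScalars₁₂ {c : R // 0 ≤ c} {c : R // 0 ≤ c}
  have h := Submodule.apply_mem_map₂ B hu hw
  rwa [Submodule.map₂_span_span] at h

end OrderedRing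

section Field

variable {𝕜 E : Type*} [Field 𝕜] [LinearOrder 𝕜] [IsStrictOrderedRing 𝕜]
  [AddCommGroup E] [Module 𝕜 E]

lemma hull_fourierMotzkin (φ : E →ₗ[𝕜] 𝕜) (W : Set E) :
    hull 𝕜 (fourierMotzkin φ W) =
      dual (LinearMap.id : Module.Dual 𝕜 E →ₗ[𝕜] _) {φ} ⊓ hull 𝕜 W := by
  apply le_antisymm
  · refine Submodule.span_le.2 ?_
    rintro _ (⟨hw, hφw⟩ | ⟨u, ⟨hu, hφu⟩, w, ⟨hw, hφw⟩, rfl⟩)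
    · exact ⟨by simpa using hφw, Submodule.subset_span hw⟩
    · refine ⟨by simp [mul_comm], ?_⟩
      change φ u • w - φ w • u ∈ hull 𝕜 W
      rw [sub_eq_add_neg, ← neg_smul]
      exact add_mem (smul_mem _ hφu (Submodule.subset_span hw))
        (smul_mem _ (neg_nonneg.2 hφw.le) (Submodule.subset_span hu))
  · intro y hy
    obtain ⟨hφy, hy⟩ := Submodule.mem_inf.1 hy
    replace hφy : 0 ≤ φ y := by simpa using hφy
    obtain ⟨g, hg, n, hn, rfl⟩ := exists_add_of_mem_hull (fun w => le_or_gt 0 (φ w)) hy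
    have hg' : g ∈ hull 𝕜 (fourierMotzkin φ W) := Submodule.span_mono subset_union_left hg
    rcases apply_neg_or_eq_zero_of_mem_hull (fun w hw => hw.2) hn with hφn | rfl
    · have hφg : 0 < φ g := by rw [map_add] at hφy; linarith
      -- `φ g ≥ -φ n > 0` makes both coefficients nonnegative.
      have hgn : g + n = (φ (g + n) / φ g) • g + (φ g)⁻¹ • eliminate φ g n := by
        rw [eliminate_apply, map_add]
        match_scalars
        · field_simp
          ring
        · field_simp
      rw [hgn]
      refine add_mem (smul_mem _ (div_nonneg hφy hφg.le) hg')
        (smul_mem _ (inv_nonneg.2 hφg.le) ?_)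
      exact Submodule.span_mono subset_union_right (eliminate_mem_hull_image2 φ hg hn)
    · simpa using hg'

theorem DualFG.fg [FiniteDimensional 𝕜 E] {C : PointedCone 𝕜 E}
    (hC : C.DualFG (LinearMap.id : Module.Dual 𝕜 E →ₗ[𝕜] _)) : C.FG := by
  classical
  obtain ⟨s, rfl⟩ := hC
  induction s using Finset.induction_on with
  | empty => simpa using Module.Finite.fg_top
  | insert φ s _ ih =>
    obtain ⟨W, hW, hWC⟩ := Submodule.fg_def.1 ih
    rw [Finset.coe_insert, dual_insert, ← hWC, ← hull_fourierMotzkin]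
    exact Submodule.fg_def.2 ⟨_, finite_fourierMotzkin φ hW, rfl⟩

end Field

end PointedCone

lemma mem_horizonCone_of_forall_add_smul_mem {E : Type*} [NormedAddCommGroup E]
    [NormedSpace ℝ E] {A : Set E} {a q : E} (h : ∀ t : ℝ, 0 ≤ t → a + t • q ∈ A) :
    q ∈ horizonCone A := by
  have hl := tendsto_one_div_add_atTop_nhds_zero_nat (𝕜 := ℝ)
  refine ⟨fun k => a + ((k : ℝ) + 1) • q, fun k => 1 / ((k : ℝ) + 1),
    fun k => h _ (by positivity), fun k => by positivity, hl, ?_⟩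
  have hlim := (hl.smul_const a).add_const q
  rw [zero_smul, zero_add] at hlim
  refine hlim.congr fun k => ?_
  rw [smul_add, smul_smul, one_div_mul_cancel (by positivity), one_smul]

section Polyhedron

variable {E : Type*} [NormedAddCommGroup E] [InnerProductSpace ℝ E]

open Classical in
def homogenization (s : Finset (E × ℝ)) : PointedCone ℝ (E × ℝ) :=
  PointedCone.dual LinearMap.id <| ↑(insert (LinearMap.snd ℝ E ℝ) <|
    s.image fun p => p.2 • LinearMap.snd ℝ E ℝ - innerₗ E p.1 ∘ₗ LinearMap.fst ℝ E ℝ)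

lemma mem_homogenization {s : Finset (E × ℝ)} {z : E × ℝ} :
    z ∈ homogenization s ↔ 0 ≤ z.2 ∧ ∀ p ∈ s, ⟪p.1, z.1⟫ ≤ p.2 * z.2 := by
  simp only [homogenization, PointedCone.mem_dual, Finset.coe_insert, Finset.coe_image,
    Set.forall_mem_insert, Set.forall_mem_image, LinearMap.id_coe, id_eq]
  simp [sub_nonneg, mul_comm]

lemma fg_homogenization [FiniteDimensional ℝ E] (s : Finset (E × ℝ)) :
    (homogenization s).FG :=
  PointedCone.DualFG.fg ⟨_, rfl⟩

lemma norm_fst_le_of_mem_hull {B : Set (E × ℝ)} {M : ℝ} (hB : ∀ w ∈ B, ‖w.1‖ ≤ M * w.2)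
    {y : E × ℝ} (hy : y ∈ PointedCone.hull ℝ B) : ‖y.1‖ ≤ M * y.2 := by
  induction hy using Submodule.span_induction with
  | mem w hw => exact hB w hw
  | zero => simp
  | add y z _ _ hy hz =>
    calc ‖(y + z).1‖ ≤ ‖y.1‖ + ‖z.1‖ := norm_add_le _ _
      _ ≤ M * (y + z).2 := by simp only [Prod.snd_add]; linarith
  | smul c y _ hy =>
    rw [← Nonneg.coe_smul, Prod.smul_fst, Prod.smul_snd, norm_smul, Real.norm_of_nonneg c.2,
      smul_eq_mul, mul_left_comm]
    exact mul_le_mul_of_nonneg_left hy c.2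

theorem exists_norm_sub_le_of_mem_polyhedron [FiniteDimensional ℝ E] (s : Finset (E × ℝ)) :
    ∃ C : ℝ, ∀ v : E, (∀ p ∈ s, ⟪p.1, v⟫ ≤ p.2) →
      ∃ q : E, (∀ p ∈ s, ⟪p.1, q⟫ ≤ 0) ∧ ‖v - q‖ ≤ C := by
  obtain ⟨W, hWfin, hW⟩ := Submodule.fg_def.1 (fg_homogenization s)
  obtain ⟨M, hM⟩ := ((hWfin.sep fun w => 0 < w.2).image fun w => ‖w.1‖ / w.2).bddAbove
  refine ⟨M, fun v hv => ?_⟩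
  have hv1 : ((v, 1) : E × ℝ) ∈ PointedCone.hull ℝ W := by
    rw [PointedCone.hull, hW]
    exact mem_homogenization.2 ⟨zero_le_one, by simpa using hv⟩
  obtain ⟨b, hb, z, hz, hbz⟩ := PointedCone.exists_add_of_mem_hull (fun w => lt_or_ge 0 w.2) hv1
  have hzK := mem_homogenization.1 (hW ▸ Submodule.span_mono (sep_subset _ _) hz)
  have hz2 : z.2 = 0 := by
    refine le_antisymm ?_ hzK.1
    simpa using PointedCone.apply_nonneg_of_mem_hull (φ := -LinearMap.snd ℝ E ℝ)
      (fun w hw => by simpa using hw.2) hz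
  have hbM : ‖b.1‖ ≤ M * b.2 := norm_fst_le_of_mem_hull (fun w hw => by
    rw [← div_le_iff₀ hw.2]; exact hM ⟨w, hw, rfl⟩) hb
  refine ⟨z.1, fun p hp => by simpa [hz2] using hzK.2 p hp, ?_⟩
  obtain ⟨hb1, hb2⟩ := Prod.ext_iff.1 hbz
  simp only [Prod.fst_add, Prod.snd_add, hz2, add_zero] at hb1 hb2
  simpa [← hb1, hb2] using hbM

lemma mem_horizonCone_of_inner_nonpos {s : Finset (E × ℝ)}
    (hne : {v | ∀ p ∈ s, ⟪p.1, v⟫ ≤ p.2}.Nonempty) {q : E} (hq : ∀ p ∈ s, ⟪p.1, q⟫ ≤ 0) :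
    q ∈ horizonCone {v | ∀ p ∈ s, ⟪p.1, v⟫ ≤ p.2} := by
  obtain ⟨a, ha⟩ := hne
  refine mem_horizonCone_of_forall_add_smul_mem (a := a) fun t ht p hp => ?_
  rw [inner_add_right, inner_smul_right]
  nlinarith [ha p hp, hq p hp]

end Polyhedron

/-- Corollary 3.1 (d): if `D` is a nonempty convex polyhedron, then for
every `x ∈ (D^∞)*` with `F_{D,x} ≠ ∅`, the excess of `F_{D,x}` over `F_{D^∞,x}` is
finite. -/
theorem excess_finite_of_polyhedral {n : ℕ} (D : Set (Eu n)) (hne : D.Nonempty)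
    (hpoly : IsPolyhedral D) (x : Eu n) (hx : ∀ w ∈ horizonCone D, ⟪w, x⟫ ≤ 0)
    (hface : {v | v ∈ D ∧ ∀ v' ∈ D, ⟪v', x⟫ ≤ ⟪v, x⟫}.Nonempty) :
    ∃ C : ℝ, ∀ v ∈ {v | v ∈ D ∧ ∀ v' ∈ D, ⟪v', x⟫ ≤ ⟪v, x⟫},
      Metric.infDist v
        {w | w ∈ horizonCone D ∧ ∀ w' ∈ horizonCone D, ⟪w', x⟫ ≤ ⟪w, x⟫} ≤ C := by
  obtain ⟨s, rfl⟩ := hpoly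
  obtain ⟨v₀, hv₀, -⟩ := hface
  obtain ⟨C, hC⟩ := exists_norm_sub_le_of_mem_polyhedron (insert (-x, -⟪v₀, x⟫) s)
  refine ⟨C, ?_⟩
  rintro v ⟨hvD, hvmax⟩
  obtain ⟨q, hq, hvq⟩ := hC v fun p hp => by
    rcases Finset.mem_insert.1 hp with rfl | hp
    · simpa [real_inner_comm] using hvmax v₀ hv₀
    · exact hvD p hp
  have hqD : q ∈ horizonCone {v | ∀ p ∈ s, ⟪p.1, v⟫ ≤ p.2} :=
    mem_horizonCone_of_inner_nonpos hne fun p hp => hq p (Finset.mem_insert_of_mem hp)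
  have hqx : ⟪q, x⟫ = 0 :=
    le_antisymm (hx q hqD) (by simpa [real_inner_comm] using hq _ (Finset.mem_insert_self _ _))
  refine (Metric.infDist_le_dist_of_mem (y := q) ?_).trans ?_
  · exact ⟨hqD, fun w' hw' => hqx ▸ hx w' hw'⟩
  · rwa [dist_eq_norm]
end
end

section
/- Let h be a proper lsc sublinear function on ℝⁿ with h = σ_D for a closed convex set D. If h is locally Lipschitz continuous at 0 relative to dom h, then dom h is closed. -/
open Filter Metric Set
open scoped Topology RealInnerProductSpace

noncomputable section

/-- for a proper lsc sublinear function `h = σ_D` (support function of a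
nonempty closed convex set `D`), if `h` is locally Lipschitz continuous at `0` relative to
`dom h`, then `dom h` is closed. -/
theorem domain_closed_of_relLipschitz_support {n : ℕ} (D : Set (Eu n)) (hne : D.Nonempty)
    (hcl : IsClosed D) (hconv : Convex ℝ D)
    (hlip : RelLipschitzAt (supportFn D) {x : Eu n | supportFn D x < ⊤} 0) :
    IsClosed {x : Eu n | supportFn D x < ⊤} := by
  obtain ⟨κ, hκ0, V, hV, hVlip⟩ := hlip
  obtain ⟨r, hr, hball⟩ := Metric.mem_nhds_iff.mp hV
  obtain ⟨v₀, hv₀⟩ := hne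
  have h0 : supportFn D 0 = 0 := by
    unfold supportFn
    have himg : (fun v : Eu n => ((⟪v, (0:Eu n)⟫ : ℝ) : EReal)) '' D = {(0:EReal)} := by
      apply Set.eq_singleton_iff_nonempty_unique_mem.mpr
      constructor
      · exact ⟨(0:EReal), ⟨v₀, hv₀, by simp⟩⟩
      · rintro y ⟨v, hv, rfl⟩; simp
    rw [himg, sSup_singleton]
  have hmem0 : (0:Eu n) ∈ {x : Eu n | supportFn D x < ⊤} ∩ V := by
    exact ⟨by simp [h0], hball (Metric.mem_ball_self hr)⟩
  -- key bound on dom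
  have key : ∀ v ∈ D, ∀ x : Eu n, supportFn D x < ⊤ → ⟪v, x⟫ ≤ κ * ‖x‖ := by
    intro v hv x hx
    rcases eq_or_ne x 0 with rfl | hx0
    · simp [inner_zero_right]
    · have hxnorm : (0:ℝ) < ‖x‖ := norm_pos_iff.mpr hx0
      set t : ℝ := r / (2 * ‖x‖) with ht
      have ht0 : 0 < t := div_pos hr (by positivity)
      have hty : ‖t • x‖ = r / 2 := by
        rw [norm_smul, Real.norm_of_nonneg ht0.le, ht]
        field_simp
      -- h x is a real number
      have hxne_bot : supportFn D x ≠ ⊥ := by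
        have hle : ((⟪v₀, x⟫ : ℝ) : EReal) ≤ supportFn D x :=
          le_sSup ⟨v₀, hv₀, rfl⟩
        exact fun h => by simp [h] at hle
      set M : ℝ := (supportFn D x).toReal with hM
      have hxM : supportFn D x = (M : EReal) := (EReal.coe_toReal hx.ne hxne_bot).symm
      have hboundM : ∀ w ∈ D, ⟪w, x⟫ ≤ M := by
        intro w hw
        have : ((⟪w, x⟫ : ℝ) : EReal) ≤ (M : EReal) := by
          rw [← hxM]; exact le_sSup ⟨w, hw, rfl⟩
        exact_mod_cast this
      have hydom : supportFn D (t • x) < ⊤ := by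
        have : supportFn D (t • x) ≤ ((t * M : ℝ) : EReal) := by
          apply sSup_le
          rintro y ⟨w, hw, rfl⟩
          have : ⟪w, t • x⟫ ≤ t * M := by
            rw [real_inner_smul_right]
            exact mul_le_mul_of_nonneg_left (hboundM w hw) ht0.le
          exact EReal.coe_le_coe_iff.mpr this
        exact lt_of_le_of_lt this (EReal.coe_lt_top _)
      have hyV : t • x ∈ V := by
        apply hball
        rw [Metric.mem_ball, dist_zero_right, hty]
        linarith
      have hlipy := hVlip (t • x) ⟨hydom, hyV⟩ 0 hmem0
      rw [h0, sub_zero] at hlipy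
      have hle : supportFn D (t • x) ≤ ((κ * ‖t • x‖ : ℝ) : EReal) := by
        refine le_trans ?_ hlipy
        unfold eabsdiff
        refine le_trans ?_ (le_max_left _ _)
        simp only [sub_zero]
        exact le_rfl
      have hinner : ((⟪v, t • x⟫ : ℝ) : EReal) ≤ supportFn D (t • x) :=
        le_sSup ⟨v, hv, rfl⟩
      have hfin : ⟪v, t • x⟫ ≤ κ * ‖t • x‖ := by
        exact_mod_cast hinner.trans hle
      rw [real_inner_smul_right, norm_smul, Real.norm_of_nonneg ht0.le] at hfin
      nlinarith [hfin, ht0]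
  -- closedness via closure
  apply isClosed_of_closure_subset
  intro x hx
  have hvx : ∀ v ∈ D, ⟪v, x⟫ ≤ κ * ‖x‖ := by
    intro v hv
    have hclosed : IsClosed {y : Eu n | ⟪v, y⟫ ≤ κ * ‖y‖} :=
      isClosed_le (continuous_const.inner continuous_id) (continuous_const.mul continuous_norm)
    exact hclosed.closure_subset_iff.mpr (fun y hy => key v hv y hy) hx
  show supportFn D x < ⊤
  have hle : supportFn D x ≤ ((κ * ‖x‖ : ℝ) : EReal) := by
    apply sSup_le
    rintro y ⟨v, hv, rfl⟩
    exact EReal.coe_le_coe_iff.mpr (hvx v hv)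
  exact lt_of_le_of_lt hle (EReal.coe_lt_top _)
end
end

section
/- Let f(x) = |x| on ℝ and let v̄ ∈ ℝ. The outer limiting subdifferential of f at 0 with respect to v̄ is: ∂^>_{v̄} f(0) = {−1, 1} if v̄ ∈ (−1, 1); {−1} if v̄ ≥ 1; {1} if v̄ ≤ −1. In particular v̄ ∉ ∂^>_{v̄} f(0) for every v̄ ∈ ℝ. -/
open Filter Metric Set
open scoped Topology RealInnerProductSpace

noncomputable section

/-!
Away from the kink, `|·|` is differentiable with locally constant derivative `sign x`, so its
limiting subdifferential there is `{sign x}`. A sequence `x_k → 0` with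
`|x_k| > v̄ x_k` has `x_k ≠ 0`, and `sign x_k = 1` forces `v̄ < 1` while `sign x_k = -1` forces
`v̄ > -1`. Hence `∂^>_{v̄}|·|(0)` consists of those `±1` allowed by `v̄`, each attained along
`x_k = ±1/(k+1)`.
-/

section FrechetSubdiff

variable {E : Type*} [NormedAddCommGroup E] [InnerProductSpace ℝ E]

theorem norm_le_of_eventually_inner_sub_le {w x : E} {c : ℝ} (hc : 0 ≤ c)
    (h : ∀ᶠ y in 𝓝 x, ⟪w, y - x⟫ ≤ c * ‖y - x‖) : ‖w‖ ≤ c := by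
  have hline : Tendsto (fun t : ℝ => x + t • w) (𝓝[>] 0) (𝓝 x) :=
    ((continuous_const.add (continuous_id.smul continuous_const)).tendsto' 0 x
      (by simp)).mono_left nhdsWithin_le_nhds
  obtain ⟨t, ht, ht0⟩ := ((hline.eventually h).and self_mem_nhdsWithin).exists
  simp only [add_sub_cancel_left, real_inner_smul_right, real_inner_self_eq_norm_sq,
    norm_smul, Real.norm_eq_abs, abs_of_pos (ht0 : (0 : ℝ) < t)] at ht
  have hw : ‖w‖ ^ 2 ≤ c * ‖w‖ := by nlinarith [norm_nonneg w]
  nlinarith [norm_nonneg w]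

theorem mem_regSubdiff_coe_iff {f : E → ℝ} {x v : E} :
    v ∈ regSubdiff (fun y => (f y : EReal)) x ↔
      ∀ ε > 0, ∀ᶠ y in 𝓝 x, ⟪v, y - x⟫ - ε * ‖y - x‖ ≤ f y - f x := by
  simp only [regSubdiff, mem_ofPred_eq, ← EReal.coe_add, EReal.coe_le_coe_iff,
    Metric.nhds_basis_closedBall.eventually_iff, mem_closedBall, dist_eq_norm]
  refine forall₂_congr fun ε _ => exists_congr fun δ => and_congr_right fun _ =>
    forall_congr' fun y => imp_congr_right fun _ => ?_
  constructor <;> intro h <;> linarith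

variable [CompleteSpace E] {f : E → ℝ} {x : E}

theorem regSubdiff_coe_of_hasGradientAt {g : E} (hf : HasGradientAt f g x) :
    regSubdiff (fun y => (f y : EReal)) x = {g} := by
  have hlin := hasGradientAt_iff_isLittleO.1 hf
  ext v
  simp only [mem_regSubdiff_coe_iff, mem_singleton_iff]
  constructor
  · intro hv
    suffices ∀ ε > 0, ‖v - g‖ ≤ 2 * ε by
      rw [← sub_eq_zero, ← norm_le_zero_iff]
      exact le_of_forall_pos_le_add fun ε hε => by linarith [this (ε / 2) (by positivity)]
    intro ε hε
    refine norm_le_of_eventually_inner_sub_le (x := x) (by positivity) ?_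
    filter_upwards [hv ε hε, hlin.def hε] with y hle hsmall
    rw [Real.norm_eq_abs, abs_le] at hsmall
    rw [inner_sub_left]
    linarith [hsmall.2]
  · rintro rfl ε hε
    filter_upwards [hlin.def hε] with y hsmall
    rw [Real.norm_eq_abs, abs_le] at hsmall
    linarith [hsmall.1]

theorem limSubdiff_coe_of_eventually_hasGradientAt {f' : E → E}
    (hf : ∀ᶠ y in 𝓝 x, HasGradientAt f (f' y) y) (hf' : ContinuousAt f' x) :
    limSubdiff (fun y => (f y : EReal)) x = {f' x} := by
  ext v
  constructor
  · rintro ⟨xk, vk, hxk, -, hvk, hv⟩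
    have hgrad : ∀ᶠ k in atTop, f' (xk k) = vk k :=
      (hxk.eventually hf).mono fun k hk => by
        simpa [regSubdiff_coe_of_hasGradientAt hk, eq_comm] using hvk k
    exact tendsto_nhds_unique hv ((hf'.tendsto.comp hxk).congr' hgrad)
  · rintro rfl
    refine ⟨fun _ => x, fun _ => f' x, tendsto_const_nhds, tendsto_const_nhds, fun _ => ?_,
      tendsto_const_nhds⟩
    rw [regSubdiff_coe_of_hasGradientAt hf.self_of_nhds]
    rfl

end FrechetSubdiff

theorem limSubdiff_abs_of_pos {x : ℝ} (hx : 0 < x) :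
    limSubdiff (fun x : ℝ => ((|x| : ℝ) : EReal)) x = {1} :=
  limSubdiff_coe_of_eventually_hasGradientAt (f' := fun _ => 1)
    ((eventually_gt_nhds hx).mono fun _ hy => (hasDerivAt_abs_pos hy).hasGradientAt')
    continuousAt_const

theorem limSubdiff_abs_of_neg {x : ℝ} (hx : x < 0) :
    limSubdiff (fun x : ℝ => ((|x| : ℝ) : EReal)) x = {-1} :=
  limSubdiff_coe_of_eventually_hasGradientAt (f' := fun _ => -1)
    ((eventually_lt_nhds hx).mono fun _ hy => (hasDerivAt_abs_neg hy).hasGradientAt')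
    continuousAt_const

theorem mem_outerSubdiffWrt_abs_iff {vb v : ℝ} :
    v ∈ outerSubdiffWrt (fun x : ℝ => ((|x| : ℝ) : EReal)) 0 vb ↔
      (v = -1 ∧ -1 < vb) ∨ (v = 1 ∧ vb < 1) := by
  simp only [outerSubdiffWrt, mem_ofPred_eq, RCLike.inner_apply, conj_trivial, sub_zero,
    abs_zero, EReal.coe_zero, zero_add, EReal.coe_lt_coe_iff]
  constructor
  · rintro ⟨xk, vk, -, -, hlt, hvk, hv⟩
    have hsign (k : ℕ) : (vk k = -1 ∧ -1 < vb) ∨ (vk k = 1 ∧ vb < 1) := by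
      rcases lt_trichotomy (xk k) 0 with hneg | hzero | hpos
      · have := hlt k
        rw [abs_of_neg hneg] at this
        exact Or.inl ⟨by simpa [limSubdiff_abs_of_neg hneg] using hvk k, by nlinarith⟩
      · simpa [hzero] using hlt k
      · have := hlt k
        rw [abs_of_pos hpos] at this
        exact Or.inr ⟨by simpa [limSubdiff_abs_of_pos hpos] using hvk k, by nlinarith⟩
    have hclosed : IsClosed {w : ℝ | (w = -1 ∧ -1 < vb) ∨ (w = 1 ∧ vb < 1)} :=
      ((toFinite {-1, 1}).subset (by rintro w (⟨rfl, -⟩ | ⟨rfl, -⟩) <;> simp)).isClosed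
    exact hclosed.mem_of_tendsto hv (Eventually.of_forall hsign)
  · intro hv
    have hxk : Tendsto (fun k : ℕ => v * (1 / ((k : ℝ) + 1))) atTop (𝓝 0) := by
      simpa using tendsto_one_div_add_atTop_nhds_zero_nat.const_mul v
    refine ⟨fun k => v * (1 / ((k : ℝ) + 1)), fun _ => v, hxk,
      EReal.tendsto_coe.2 (by simpa using hxk.abs), fun k => ?_, fun k => ?_, tendsto_const_nhds⟩
    all_goals
      have hk : (0 : ℝ) < 1 / ((k : ℝ) + 1) := by positivity
      rcases hv with ⟨rfl, hvb⟩ | ⟨rfl, hvb⟩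
    · rw [abs_of_neg (by linarith)]; nlinarith
    · rw [abs_of_pos (by linarith)]; nlinarith
    · rw [limSubdiff_abs_of_neg (by linarith)]; rfl
    · rw [limSubdiff_abs_of_pos (by linarith)]; rfl

/-- Example 4.1: for `f(x) = |x|`, the outer limiting subdifferential of
`f` at `0` with respect to `v̄` is `{-1, 1}` for `v̄ ∈ (-1, 1)`, `{-1}` for `v̄ ≥ 1`, `{1}`
for `v̄ ≤ -1`; in particular `v̄ ∉ ∂^>_{v̄} f(0)` for every `v̄`. -/
theorem outerSubdiff_abs (vb : ℝ) :
    (-1 < vb ∧ vb < 1 →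
      outerSubdiffWrt (fun x : ℝ => ((|x| : ℝ) : EReal)) 0 vb = {-1, 1}) ∧
    (1 ≤ vb → outerSubdiffWrt (fun x : ℝ => ((|x| : ℝ) : EReal)) 0 vb = {-1}) ∧
    (vb ≤ -1 → outerSubdiffWrt (fun x : ℝ => ((|x| : ℝ) : EReal)) 0 vb = {1}) ∧
    vb ∉ outerSubdiffWrt (fun x : ℝ => ((|x| : ℝ) : EReal)) 0 vb := by
  simp only [Set.ext_iff, mem_insert_iff, mem_singleton_iff, mem_outerSubdiffWrt_abs_iff]
  grind
end
end

section
/- Let f(x) = |x| on ℝ and v̄ ∈ ℝ, and consider the level-set mapping S(α) := {x ∈ ℝ | |x| − v̄ x ≤ α}. Then S has the Lipschitz-like property relative to X = ℝ₊ = [0, ∞) at 0 for 0, with relative graphical modulus lip_{ℝ₊} S(0 | 0) = 1/min{1 − v̄, 1 + v̄} if v̄ ∈ (−1, 1); = 1/(1 + v̄) if v̄ ≥ 1; = 1/(1 − v̄) if v̄ ≤ −1. -/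
open Filter Metric Set
open scoped Topology RealInnerProductSpace

noncomputable section

/-- the relative graphical modulus in Example 4.1, as a single piecewise formula. -/
def kap0 (vb : ℝ) : ℝ :=
  if 1 ≤ vb then 1/(1+vb) else if vb ≤ -1 then 1/(1-vb) else 1/min (1-vb) (1+vb)

lemma kap0_nonneg (vb : ℝ) : 0 ≤ kap0 vb := by
  unfold kap0
  split_ifs with h1 h2
  · positivity
  · have : 0 < 1 - vb := by linarith
    positivity
  · push_neg at h1 h2
    have h3 : 0 < min (1-vb) (1+vb) := lt_min (by linarith) (by linarith)
    positivity

lemma kap0_ge_left (vb : ℝ) (h : vb < 1) : 1/(1-vb) ≤ kap0 vb := by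
  unfold kap0
  split_ifs with h1 h2
  · linarith
  · exact le_refl _
  · push_neg at h2
    have h3 : 0 < min (1-vb) (1+vb) := lt_min (by linarith) (by linarith)
    exact one_div_le_one_div_of_le h3 (min_le_left _ _)

lemma kap0_ge_right (vb : ℝ) (h : -1 < vb) : 1/(1+vb) ≤ kap0 vb := by
  unfold kap0
  split_ifs with h1 h2
  · exact le_refl _
  · linarith
  · push_neg at h1
    have h3 : 0 < min (1-vb) (1+vb) := lt_min (by linarith) (by linarith)
    exact one_div_le_one_div_of_le h3 (min_le_right _ _)

/-- upper-bound construction: given `u` in `S α'`, project it into `S α`. -/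
lemma kap0_ub (vb : ℝ) {α α' u : ℝ} (hα : 0 ≤ α) (hu : |u| - vb * u ≤ α') :
    ∃ u'', (|u''| - vb * u'' ≤ α) ∧ |u - u''| ≤ kap0 vb * |α' - α| := by
  by_cases hmem : |u| - vb * u ≤ α
  · exact ⟨u, hmem, by
      simpa using mul_nonneg (kap0_nonneg vb) (abs_nonneg (α' - α))⟩
  push_neg at hmem
  rcases lt_trichotomy u 0 with hu0 | rfl | hu0
  · -- u < 0 : project to -α/(1+vb)
    rw [abs_of_neg hu0] at hu hmem
    have hv : 0 < 1 + vb := by nlinarith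
    have hv' : vb < 1 + vb + vb * vb := by nlinarith
    refine ⟨-α/(1+vb), ?_, ?_⟩
    · have hle : -α/(1+vb) ≤ 0 := div_nonpos_of_nonpos_of_nonneg (by linarith) hv.le
      rw [abs_of_nonpos hle]
      have heq : -(-α/(1+vb)) - vb * (-α/(1+vb)) = α := by field_simp; ring
      linarith
    · have hαα : α < α' := by nlinarith
      have h1 : u < -α/(1+vb) := by
        rw [lt_div_iff₀ hv]; nlinarith
      have h2 : -α'/(1+vb) ≤ u := by
        rw [div_le_iff₀ hv]; nlinarith
      rw [abs_of_neg (by linarith : u - (-α/(1+vb)) < 0), abs_of_pos (by linarith : (0:ℝ) < α' - α)]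
      have hk := kap0_ge_right vb (by linarith)
      have hstep : -(u - (-α/(1+vb))) ≤ (α' - α) / (1+vb) := by
        rw [le_div_iff₀ hv]
        nlinarith [mul_le_mul_of_nonneg_right h2 hv.le,
          div_mul_cancel₀ (-α) hv.ne', div_mul_cancel₀ (-α') hv.ne']
      calc -(u - (-α/(1+vb))) ≤ (α' - α) / (1+vb) := hstep
        _ = 1/(1+vb) * (α' - α) := by ring
        _ ≤ kap0 vb * (α' - α) := by nlinarith
  · exfalso; simp at hmem; linarith
  · -- u > 0 : project to α/(1-vb)
    rw [abs_of_pos hu0] at hu hmem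
    have hv : 0 < 1 - vb := by nlinarith
    refine ⟨α/(1-vb), ?_, ?_⟩
    · have hge : 0 ≤ α/(1-vb) := div_nonneg hα hv.le
      rw [abs_of_nonneg hge]
      have : α/(1-vb) - vb * (α/(1-vb)) = α := by field_simp
      linarith [this.le]
    · have hαα : α < α' := by nlinarith
      have h1 : α/(1-vb) < u := by
        rw [div_lt_iff₀ hv]; nlinarith
      have h2 : u ≤ α'/(1-vb) := by
        rw [le_div_iff₀ hv]; nlinarith
      rw [abs_of_pos (by linarith : (0:ℝ) < u - α/(1-vb)), abs_of_pos (by linarith : (0:ℝ) < α' - α)]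
      have hk := kap0_ge_left vb (by linarith)
      have hstep : u - α/(1-vb) ≤ (α' - α) / (1-vb) := by
        rw [le_div_iff₀ hv]
        nlinarith [mul_le_mul_of_nonneg_right h2 hv.le, div_mul_cancel₀ α hv.ne',
          div_mul_cancel₀ α' hv.ne']
      calc u - α/(1-vb) ≤ (α' - α) / (1-vb) := hstep
        _ = 1/(1-vb) * (α' - α) := by ring
        _ ≤ kap0 vb * (α' - α) := by nlinarith

/-- lower-bound lemma: any Lipschitz-like constant on neighborhoods of `0` dominates `kap0`. -/
lemma kap0_lb (vb κ : ℝ) (V W : Set ℝ) (hV : V ∈ 𝓝 (0:ℝ)) (hW : W ∈ 𝓝 (0:ℝ))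
    (H : ∀ a ∈ Ici (0:ℝ) ∩ V, ∀ a' ∈ Ici (0:ℝ) ∩ V, ∀ u ∈ {x : ℝ | |x| - vb * x ≤ a'} ∩ W,
      ∃ u'' ∈ {x : ℝ | |x| - vb * x ≤ a}, ‖u - u''‖ ≤ κ * ‖a' - a‖) :
    kap0 vb ≤ κ := by
  obtain ⟨ε, hε, hεV⟩ := Metric.mem_nhds_iff.1 hV
  obtain ⟨δ, hδ, hδW⟩ := Metric.mem_nhds_iff.1 hW
  have h0V : (0:ℝ) ∈ V := hεV (by simpa using hε)
  have claim1 : vb < 1 → 1/(1-vb) ≤ κ := by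
    intro hvb
    have hv : 0 < 1 - vb := by linarith
    set α' : ℝ := min (ε/2) ((1-vb)*δ/2) with hα'
    have hα'pos : 0 < α' := lt_min (by linarith) (by positivity)
    have hα'V : α' ∈ V := hεV (by
      simp only [Metric.mem_ball, Real.dist_eq, sub_zero, abs_of_pos hα'pos]
      calc α' ≤ ε/2 := min_le_left _ _
        _ < ε := by linarith)
    set u : ℝ := α'/(1-vb) with huu
    have hupos : 0 < u := div_pos hα'pos hv
    have huW : u ∈ W := hδW (by
      simp only [Metric.mem_ball, Real.dist_eq, sub_zero, abs_of_pos hupos]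
      rw [huu, div_lt_iff₀ hv]
      calc α' ≤ (1-vb)*δ/2 := min_le_right _ _
        _ < δ * (1-vb) := by nlinarith)
    have huS : |u| - vb * u ≤ α' := by
      rw [abs_of_pos hupos, huu]
      have heq : α'/(1-vb) - vb * (α'/(1-vb)) = α' := by field_simp
      linarith
    obtain ⟨u'', hu''S, hu''⟩ := H 0 ⟨mem_Ici.2 le_rfl, h0V⟩ α' ⟨mem_Ici.2 hα'pos.le, hα'V⟩ u ⟨huS, huW⟩
    have hu''le : u'' ≤ 0 := by
      by_contra hc
      push_neg at hc
      have : |u''| - vb * u'' > 0 := by rw [abs_of_pos hc]; nlinarith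
      exact absurd hu''S (by simp only [mem_setOf_eq]; linarith)
    have hdist : u - u'' ≤ κ * α' := by
      have := hu''
      rw [Real.norm_eq_abs, Real.norm_eq_abs, sub_zero, abs_of_pos hα'pos] at this
      calc u - u'' ≤ |u - u''| := le_abs_self _
        _ ≤ κ * α' := this
    have hkey : α' ≤ κ * α' * (1-vb) := by
      have h1 : u ≤ κ * α' := by linarith
      have := mul_le_mul_of_nonneg_right h1 hv.le
      rwa [huu, div_mul_cancel₀ _ hv.ne'] at this
    rw [div_le_iff₀ hv]
    nlinarith
  have claim2 : -1 < vb → 1/(1+vb) ≤ κ := by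
    intro hvb
    have hv : 0 < 1 + vb := by linarith
    set α' : ℝ := min (ε/2) ((1+vb)*δ/2) with hα'
    have hα'pos : 0 < α' := lt_min (by linarith) (by positivity)
    have hα'V : α' ∈ V := hεV (by
      simp only [Metric.mem_ball, Real.dist_eq, sub_zero, abs_of_pos hα'pos]
      calc α' ≤ ε/2 := min_le_left _ _
        _ < ε := by linarith)
    set u : ℝ := -α'/(1+vb) with huu
    have huneg : u < 0 := div_neg_of_neg_of_pos (by linarith) hv
    have huW : u ∈ W := hδW (by
      simp only [Metric.mem_ball, Real.dist_eq, sub_zero, abs_of_neg huneg]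
      rw [huu, neg_div, neg_neg, div_lt_iff₀ hv]
      calc α' ≤ (1+vb)*δ/2 := min_le_right _ _
        _ < δ * (1+vb) := by nlinarith)
    have huS : |u| - vb * u ≤ α' := by
      rw [abs_of_neg huneg, huu]
      have heq : -(-α'/(1+vb)) - vb * (-α'/(1+vb)) = α' := by field_simp; ring
      linarith
    obtain ⟨u'', hu''S, hu''⟩ := H 0 ⟨mem_Ici.2 le_rfl, h0V⟩ α' ⟨mem_Ici.2 hα'pos.le, hα'V⟩ u ⟨huS, huW⟩
    have hu''ge : 0 ≤ u'' := by
      by_contra hc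
      push_neg at hc
      have : |u''| - vb * u'' > 0 := by rw [abs_of_neg hc]; nlinarith
      exact absurd hu''S (by simp only [mem_setOf_eq]; linarith)
    have hdist : u'' - u ≤ κ * α' := by
      have := hu''
      rw [Real.norm_eq_abs, Real.norm_eq_abs, sub_zero, abs_of_pos hα'pos] at this
      calc u'' - u ≤ |u - u''| := by rw [abs_sub_comm]; exact le_abs_self _
        _ ≤ κ * α' := this
    have hkey : α' ≤ κ * α' * (1+vb) := by
      have h1 : -u ≤ κ * α' := by linarith
      have := mul_le_mul_of_nonneg_right h1 hv.le
      rw [huu, neg_div, neg_neg, div_mul_cancel₀ _ hv.ne'] at this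
      linarith
    rw [div_le_iff₀ hv]
    nlinarith
  unfold kap0
  split_ifs with h1 h2
  · exact claim2 (by linarith)
  · exact claim1 (by linarith)
  · push_neg at h1 h2
    rcases min_cases (1-vb) (1+vb) with ⟨hmin, _⟩ | ⟨hmin, _⟩
    · rw [hmin]; exact claim1 (by linarith)
    · rw [hmin]; exact claim2 (by linarith)

/-- Example 4.1: the level-set mapping `S(α) = {x | |x| - v̄x ≤ α}` has the
Lipschitz-like property relative to `ℝ₊` at `0` for `0`, with the indicated relative
graphical modulus. -/
theorem levelSet_abs_lipschitzLikeRel (vb : ℝ) (S : ℝ → Set ℝ)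
    (hS : S = fun α : ℝ => {x : ℝ | |x| - vb * x ≤ α}) :
    (∃ κ : ℝ, 0 ≤ κ ∧ LipschitzLikeRel S (Ici (0 : ℝ)) 0 0 κ) ∧
    (-1 < vb ∧ vb < 1 →
      gmod S (Ici (0 : ℝ)) 0 0 = ((1 / min (1 - vb) (1 + vb) : ℝ) : EReal)) ∧
    (1 ≤ vb → gmod S (Ici (0 : ℝ)) 0 0 = ((1 / (1 + vb) : ℝ) : EReal)) ∧
    (vb ≤ -1 → gmod S (Ici (0 : ℝ)) 0 0 = ((1 / (1 - vb) : ℝ) : EReal)) := by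
  subst hS
  -- local closedness of the graph
  have hclosed : LocallyClosedAt
      (svGraph (fun α : ℝ => {x : ℝ | |x| - vb * x ≤ α}) univ) ((0:ℝ), (0:ℝ)) := by
    refine ⟨univ, univ_mem, ?_⟩
    rw [inter_univ]
    have : svGraph (fun α : ℝ => {x : ℝ | |x| - vb * x ≤ α}) univ
        = {p : ℝ × ℝ | |p.2| - vb * p.2 ≤ p.1} := by
      ext p; simp [svGraph]
    rw [this]
    exact isClosed_le (by fun_prop) continuous_fst
  -- the Lipschitz-like estimate with constant `kap0 vb`
  have hest : ∀ x ∈ Ici (0:ℝ) ∩ (univ : Set ℝ), ∀ x' ∈ Ici (0:ℝ) ∩ (univ : Set ℝ),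
      ∀ u ∈ {y : ℝ | |y| - vb * y ≤ x'} ∩ (univ : Set ℝ),
      ∃ u'' ∈ {y : ℝ | |y| - vb * y ≤ x}, ‖u - u''‖ ≤ kap0 vb * ‖x' - x‖ := by
    intro x hx x' _ u hu
    obtain ⟨u'', h1, h2⟩ := kap0_ub vb hx.1 hu.1
    exact ⟨u'', h1, by simpa [Real.norm_eq_abs] using h2⟩
  -- gmod equals `kap0 vb`
  have hgmod : gmod (fun α : ℝ => {x : ℝ | |x| - vb * x ≤ α}) (Ici (0:ℝ)) 0 0
      = ((kap0 vb : ℝ) : EReal) := by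
    apply le_antisymm
    · apply sInf_le
      exact ⟨kap0 vb, kap0_nonneg vb, rfl, univ, univ_mem, univ, univ_mem, hest⟩
    · apply le_sInf
      rintro c ⟨κ, hκ0, rfl, V, hV, W, hW, H⟩
      rw [EReal.coe_le_coe_iff]
      exact kap0_lb vb κ V W hV hW H
  refine ⟨⟨kap0 vb, kap0_nonneg vb, hclosed, univ, univ_mem, univ, univ_mem, hest⟩,
    ?_, ?_, ?_⟩
  · rintro ⟨h1, h2⟩
    rw [hgmod]
    congr 1
    unfold kap0
    rw [if_neg (by linarith), if_neg (by linarith)]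
  · intro h
    rw [hgmod]
    congr 1
    unfold kap0
    rw [if_pos h]
  · intro h
    rw [hgmod]
    congr 1
    unfold kap0
    rw [if_neg (by linarith), if_pos h]
end
end

section
/- Let S(q) := {x ∈ ℝⁿ | Ax + q ∈ K} be the solution mapping of a linear system, where A is an m×n matrix and K ⊆ ℝᵐ is a convex polyhedron. Then for any (p̄, x̄) ∈ graph S, the classical Mordukhovich criterion D*S(p̄ | x̄)(0) = {0} holds if and only if p̄ ∈ int(dom S), and this in turn is equivalent to N_K(Ax̄ + p̄) ∩ ker Aᵀ = {0} and to T_K(Ax̄ + p̄) + range A = ℝᵐ. -/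
open Filter Metric Set
open scoped Topology RealInnerProductSpace

noncomputable section

/-!
The graph of `S` is convex, so its limiting normal cone at `(p̄, x̄)` is the normal cone of
convex analysis, and the vectors `(y, 0)` in it are exactly the `y ∈ N_K(Ax̄ + p̄) ∩ ker Aᵀ`.
Such a `y` is nonpositive on `dom S - p̄`, hence vanishes when `p̄ ∈ int (dom S)`. The set
`N_K(Ax̄ + p̄) ∩ ker Aᵀ` is the polar of the convex cone `T_K(Ax̄ + p̄) + range A`; when it is
`{0}` that cone is dense, hence (in finite dimension) everything. Finally, `K` being polyhedral,
`K - (Ax̄ + p̄)` contains `T_K(Ax̄ + p̄) ∩ ball 0 δ` for some `δ > 0`, so `dom S - p̄` contains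
`(T_K(Ax̄ + p̄) ∩ ball 0 δ) + range A`, a convex set containing a positive multiple of every
vector, hence a neighbourhood of `0`.
-/

open scoped Pointwise

section FiniteDimensional

variable {E : Type*} [NormedAddCommGroup E] [NormedSpace ℝ E] [FiniteDimensional ℝ E]
  {s : Set E}

theorem Convex.eq_univ_of_dense (hs : Convex ℝ s) (hd : Dense s) : s = univ := by
  have hspan : affineSpan ℝ s = ⊤ := by
    refine (AffineSubspace.coe_eq_univ_iff _).1 (univ_subset_iff.1 ?_)
    rw [← hd.closure_eq]
    exact closure_minimal (subset_affineSpan ℝ s) (affineSpan ℝ s).closed_of_finiteDimensional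
  have h := hs.interior_closure_eq_interior_of_nonempty_interior
    (hs.interior_nonempty_iff_affineSpan_eq_top.2 hspan)
  rw [hd.closure_eq, interior_univ] at h
  exact univ_subset_iff.1 (h ▸ interior_subset)

theorem Convex.zero_mem_interior_of_forall_exists_smul_mem (hs : Convex ℝ s)
    (h : ∀ u, ∃ t > (0 : ℝ), t • u ∈ s) : (0 : E) ∈ interior s := by
  have h0 : (0 : E) ∈ s := by
    obtain ⟨t, -, ht⟩ := h 0
    rwa [smul_zero] at ht
  have hspan : affineSpan ℝ s = ⊤ := by
    refine eq_top_iff.2 fun u _ => ?_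
    obtain ⟨t, ht, htu⟩ := h u
    have := AffineMap.lineMap_mem t⁻¹ (mem_affineSpan ℝ h0) (mem_affineSpan ℝ htu)
    rwa [AffineMap.lineMap_apply, vsub_eq_sub, sub_zero, vadd_eq_add, add_zero, smul_smul,
      inv_mul_cancel₀ ht.ne', one_smul] at this
  obtain ⟨x, hx⟩ := hs.interior_nonempty_iff_affineSpan_eq_top.2 hspan
  obtain ⟨t, ht, htx⟩ := h (-x)
  refine hs.openSegment_interior_self_subset_interior hx htx
    ⟨t / (t + 1), 1 / (t + 1), by positivity, by positivity, by field_simp, by module⟩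

end FiniteDimensional

section NormedSpace

variable {E : Type*} [NormedAddCommGroup E] [NormedSpace ℝ E]

theorem tendsto_smul_const_nhdsGT_zero (w : E) : Tendsto (fun t : ℝ => t • w) (𝓝[>] 0) (𝓝 0) :=
  ((continuous_id.smul continuous_const).tendsto' 0 0 (zero_smul ℝ w)).mono_left
    nhdsWithin_le_nhds

theorem mem_tangCone_of_eventually {X : Set E} {x w : E}
    (h : ∀ᶠ t in 𝓝[>] (0 : ℝ), x + t • w ∈ X) : w ∈ tangCone X x := by
  obtain ⟨t, ht, hmem⟩ := exists_seq_forall_of_frequently (h.and self_mem_nhdsWithin).frequently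
  exact ⟨t, fun _ => w, fun k => (hmem k).2, tendsto_nhds_of_tendsto_nhdsWithin ht,
    tendsto_const_nhds, fun k => (hmem k).1⟩

end NormedSpace

section InnerProductSpace

variable {E : Type*} [NormedAddCommGroup E] [InnerProductSpace ℝ E]

theorem PointedCone.exists_inner_nonpos_of_ne_top [FiniteDimensional ℝ E] {C : PointedCone ℝ E}
    (hC : C ≠ ⊤) : ∃ y ≠ 0, ∀ x ∈ C, ⟪y, x⟫ ≤ 0 := by
  obtain ⟨x₀, hx₀⟩ : ∃ x₀, x₀ ∉ closure (C : Set E) := by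
    by_contra! h
    refine hC (SetLike.coe_injective ?_)
    exact C.convex.eq_univ_of_dense h
  obtain ⟨y, hy, hx₀y⟩ := ProperCone.hyperplane_separation' (Submodule.closure C) (x₀ := x₀) hx₀
  refine ⟨-y, fun h => ?_, fun x hx => ?_⟩
  · rw [neg_eq_zero.1 h, inner_zero_right] at hx₀y
    exact hx₀y.false
  · rw [inner_neg_left, real_inner_comm, neg_nonpos]
    exact hy x (subset_closure hx)

theorem eq_zero_of_eventually_inner_nonpos {y : E} (h : ∀ᶠ u in 𝓝 (0 : E), ⟪y, u⟫ ≤ 0) :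
    y = 0 := by
  obtain ⟨t, hty, ht⟩ :=
    (((tendsto_smul_const_nhdsGT_zero y).eventually h).and self_mem_nhdsWithin).exists
  rw [real_inner_smul_right] at hty
  exact real_inner_self_nonpos.1 (nonpos_of_mul_nonpos_right hty ht)

end InnerProductSpace

section ConvexNormal

variable {E F : Type*} [NormedAddCommGroup E] [InnerProductSpace ℝ E]
  [NormedAddCommGroup F] [InnerProductSpace ℝ F] {G : Set (E × F)} {a v : E × F}

theorem Convex.inner_add_inner_nonpos_of_mem_regNormalP (hG : Convex ℝ G) (ha : a ∈ G)
    (hv : v ∈ regNormalP G a) {c : E × F} (hc : c ∈ G) :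
    ⟪v.1, c.1 - a.1⟫ + ⟪v.2, c.2 - a.2⟫ ≤ 0 := by
  set r := ‖c - a‖
  have key : ∀ ε > 0, ⟪v.1, c.1 - a.1⟫ + ⟪v.2, c.2 - a.2⟫ ≤ ε * r := by
    intro ε hε
    obtain ⟨δ, hδ, hδv⟩ := hv ε hε
    set t := min 1 (δ / (r + 1))
    have ht : 0 < t := lt_min one_pos (by positivity)
    have htr : t * r ≤ δ := by
      calc t * r ≤ δ / (r + 1) * r := by gcongr; exact min_le_right _ _
        _ = δ * (r / (r + 1)) := by ring
        _ ≤ δ * 1 := by gcongr; exact div_le_one_of_le₀ (by linarith) (by positivity)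
        _ = δ := mul_one δ
    have hb := hδv _ (hG.add_smul_sub_mem ha hc ⟨ht.le, min_le_left _ _⟩)
      (by rwa [add_sub_cancel_left, norm_smul, Real.norm_of_nonneg ht.le])
    simp only [Prod.fst_add, Prod.snd_add, add_sub_cancel_left, Prod.smul_fst, Prod.smul_snd,
      Prod.fst_sub, Prod.snd_sub, real_inner_smul_right, norm_smul, Real.norm_of_nonneg ht.le]
      at hb
    nlinarith
  have hlim : Tendsto (fun ε : ℝ => ε * r) (𝓝[>] 0) (𝓝 0) := by
    simpa using (tendsto_id.mul_const r).mono_left (nhdsWithin_le_nhds (a := (0 : ℝ)))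
  exact ge_of_tendsto hlim (eventually_nhdsWithin_of_forall key)

theorem Convex.limNormalP_eq (hG : Convex ℝ G) (ha : a ∈ G) :
    limNormalP G a = {v | ∀ c ∈ G, ⟪v.1, c.1 - a.1⟫ + ⟪v.2, c.2 - a.2⟫ ≤ 0} := by
  ext v
  constructor
  · rintro ⟨b, w, hbG, hw, hb, hwv⟩ c hc
    have hlim : Tendsto (fun k => ⟪(w k).1, c.1 - (b k).1⟫ + ⟪(w k).2, c.2 - (b k).2⟫) atTop
        (𝓝 (⟪v.1, c.1 - a.1⟫ + ⟪v.2, c.2 - a.2⟫)) :=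
      ((hwv.fst_nhds).inner (tendsto_const_nhds.sub hb.fst_nhds)).add
        ((hwv.snd_nhds).inner (tendsto_const_nhds.sub hb.snd_nhds))
    exact le_of_tendsto' hlim fun k =>
      hG.inner_add_inner_nonpos_of_mem_regNormalP (hbG k) (hw k) hc
  · intro hv
    refine ⟨fun _ => a, fun _ => v, fun _ => ha, fun _ ε hε => ⟨1, one_pos, fun c hc _ => ?_⟩,
      tendsto_const_nhds, tendsto_const_nhds⟩
    exact (hv c hc).trans (by positivity)

end ConvexNormal

section Polyhedron

variable {E : Type*} [NormedAddCommGroup E] [InnerProductSpace ℝ E]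
  {s : Finset (E × ℝ)} {z : E}

def polyhedron (s : Finset (E × ℝ)) : Set E := {v | ∀ p ∈ s, ⟪p.1, v⟫ ≤ p.2}

def linTangentCone (s : Finset (E × ℝ)) (z : E) : PointedCone ℝ E where
  carrier := {w | ∀ p ∈ s, ⟪p.1, z⟫ = p.2 → ⟪p.1, w⟫ ≤ 0}
  add_mem' hw hw' p hp hpz := by
    rw [inner_add_right]
    linarith [hw p hp hpz, hw' p hp hpz]
  zero_mem' p _ _ := by rw [inner_zero_right]
  smul_mem' c w hw p hp hpz :=
    (real_inner_smul_right p.1 w c).trans_le (mul_nonpos_of_nonneg_of_nonpos c.2 (hw p hp hpz))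

theorem convex_polyhedron (s : Finset (E × ℝ)) : Convex ℝ (polyhedron s) := by
  have : polyhedron s = ⋂ p ∈ s, {v | ⟪p.1, v⟫ ≤ p.2} := by ext; simp [polyhedron]
  rw [this]
  exact convex_iInter₂ fun p _ => convex_halfSpace_le (innerₛₗ ℝ p.1).isLinear p.2

theorem sub_mem_linTangentCone {z' : E} (hz' : z' ∈ polyhedron s) :
    z' - z ∈ linTangentCone s z := fun p hp hpz => by
  rw [inner_sub_right, hpz, sub_nonpos]
  exact hz' p hp

/-- Inactive constraints stay inactive near `z`. -/
theorem eventually_add_mem_polyhedron (hz : z ∈ polyhedron s) :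
    ∀ᶠ w in 𝓝 (0 : E), w ∈ linTangentCone s z → z + w ∈ polyhedron s := by
  have hp : ∀ p ∈ s, ∀ᶠ w in 𝓝 (0 : E),
      (⟪p.1, z⟫ = p.2 → ⟪p.1, w⟫ ≤ 0) → ⟪p.1, z + w⟫ ≤ p.2 := by
    intro p hp
    rcases (hz p hp).eq_or_lt with hpz | hpz
    · refine Eventually.of_forall fun w hw => ?_
      rw [inner_add_right]
      linarith [hw hpz]
    · have hlim : Tendsto (fun w => ⟪p.1, z + w⟫) (𝓝 0) (𝓝 ⟪p.1, z⟫) := by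
        simpa using (continuous_const.inner (continuous_const.add continuous_id)).tendsto
          (0 : E)
      filter_upwards [hlim.eventually (gt_mem_nhds hpz)] with w hw _ using hw.le
  filter_upwards [(eventually_all_finset s).2 hp] with w hw hwT p hp' using hw p hp' (hwT p hp')

theorem tangCone_polyhedron (hz : z ∈ polyhedron s) :
    tangCone (polyhedron s) z = linTangentCone s z := by
  ext w
  constructor
  · rintro ⟨t, v, ht, -, hv, hmem⟩ p hp hpz
    refine le_of_tendsto' (tendsto_const_nhds.inner hv) fun k => ?_
    have := hmem k p hp
    rw [inner_add_right, real_inner_smul_right, hpz] at this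
    exact nonpos_of_mul_nonpos_right (by linarith) (ht k)
  · intro hw
    refine mem_tangCone_of_eventually ?_
    filter_upwards [(tendsto_smul_const_nhdsGT_zero w).eventually
      (eventually_add_mem_polyhedron hz), self_mem_nhdsWithin] with t ht ht0
      using ht ((linTangentCone s z).smul_mem ht0.le hw)

end Polyhedron

section LinearSystem

variable {E F : Type*} [NormedAddCommGroup E] [InnerProductSpace ℝ E]
  [NormedAddCommGroup F] [InnerProductSpace ℝ F]
  (A : F →L[ℝ] E) {K : Set E} {pb : E} {xb : F} {y : E}

theorem convex_svGraph_linearSystem (hK : Convex ℝ K) :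
    Convex ℝ (svGraph (fun q : E => {x : F | A x + q ∈ K}) univ) := by
  have : svGraph (fun q : E => {x : F | A x + q ∈ K}) univ =
      ((A : F →ₗ[ℝ] E).comp (LinearMap.snd ℝ E F) + LinearMap.fst ℝ E F) ⁻¹' K := by
    ext; simp [svGraph]
  rw [this]
  exact hK.linear_preimage _

theorem mem_interior_dom_of_forall_exists_mem_tangCone_add_apply [FiniteDimensional ℝ E]
    {s : Finset (E × ℝ)} (hz : A xb + pb ∈ polyhedron s)
    (hT : ∀ u, ∃ w ∈ tangCone (polyhedron s) (A xb + pb), ∃ x, u = w + A x) :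
    pb ∈ interior {q | ∃ x, A x + q ∈ polyhedron s} := by
  obtain ⟨δ, hδ, hloc⟩ := Metric.eventually_nhds_iff.1 (eventually_add_mem_polyhedron hz)
  set C : Set E := ((linTangentCone s (A xb + pb) : Set E) ∩ ball 0 δ) +
    (LinearMap.range (A : F →ₗ[ℝ] E) : Set E)
  have hC : (0 : E) ∈ interior C := by
    refine (((PointedCone.convex _).inter (convex_ball 0 δ)).add (Submodule.convex _))
      |>.zero_mem_interior_of_forall_exists_smul_mem fun u => ?_
    obtain ⟨w, hw, x, rfl⟩ := hT u
    rw [tangCone_polyhedron hz] at hw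
    obtain ⟨t, htw, ht⟩ := (((tendsto_smul_const_nhdsGT_zero w).eventually
      (ball_mem_nhds 0 hδ)).and self_mem_nhdsWithin).exists
    refine ⟨t, ht, t • w, ⟨(linTangentCone s _).smul_mem (le_of_lt ht) hw, htw⟩, A (t • x),
      LinearMap.mem_range_self _ _, by rw [map_smul, smul_add]⟩
  have hdom : ∀ q, q - pb ∈ C → ∃ x, A x + q ∈ polyhedron s := by
    rintro q ⟨w, ⟨hw, hwδ⟩, _, ⟨x, rfl⟩, hq⟩
    simp only [ContinuousLinearMap.coe_coe] at hq
    refine ⟨xb - x, ?_⟩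
    convert hloc (by simpa using hwδ) hw using 1
    rw [eq_add_of_sub_eq hq.symm, map_sub]
    abel
  have hlim : Tendsto (· - pb) (𝓝 pb) (𝓝 (0 : E)) := by
    simpa using (continuous_sub_right pb).tendsto pb
  exact mem_interior_iff_mem_nhds.2 (mem_of_superset (hlim (mem_interior_iff_mem_nhds.1 hC)) hdom)

variable [CompleteSpace E] [CompleteSpace F]

theorem ContinuousLinearMap.adjoint_eq_zero_of_forall_inner_apply_nonpos
    (h : ∀ x, ⟪y, A x⟫ ≤ 0) : ContinuousLinearMap.adjoint A y = 0 := by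
  have := h (ContinuousLinearMap.adjoint A y)
  rwa [← ContinuousLinearMap.adjoint_inner_left, real_inner_self_nonpos] at this

theorem inner_apply_add_sub_eq_of_adjoint_eq_zero (hy : ContinuousLinearMap.adjoint A y = 0)
    (x : F) (q : E) : ⟪y, A x + q - (A xb + pb)⟫ = ⟪y, q - pb⟫ := by
  have : A x + q - (A xb + pb) = A (x - xb) + (q - pb) := by rw [map_sub]; abel
  rw [this, inner_add_right, ← ContinuousLinearMap.adjoint_inner_left, hy, inner_zero_left,
    zero_add]

theorem mem_limNormalP_svGraph_linearSystem_iff (hK : Convex ℝ K) (hgr : A xb + pb ∈ K) :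
    (y, (0 : F)) ∈ limNormalP (svGraph (fun q : E => {x : F | A x + q ∈ K}) univ) (pb, xb) ↔
      (∀ z ∈ K, ⟪y, z - (A xb + pb)⟫ ≤ 0) ∧ ContinuousLinearMap.adjoint A y = 0 := by
  have hgr' : (pb, xb) ∈ svGraph (fun q : E => {x : F | A x + q ∈ K}) univ := ⟨trivial, hgr⟩
  rw [(convex_svGraph_linearSystem A hK).limNormalP_eq hgr']
  simp only [mem_ofPred_eq, inner_zero_left, add_zero]
  constructor
  · intro h
    refine ⟨fun z hz => ?_, A.adjoint_eq_zero_of_forall_inner_apply_nonpos fun x => ?_⟩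
    · simpa [sub_sub] using h (z - A xb, xb) ⟨trivial, by simpa⟩
    · have hc : A (xb - x) + (pb + A x) ∈ K := by
        convert hgr using 1
        rw [map_sub]; abel
      simpa using h (pb + A x, xb - x) ⟨trivial, hc⟩
  · rintro ⟨hy, hAy⟩ c ⟨-, hc⟩
    simpa [inner_apply_add_sub_eq_of_adjoint_eq_zero A hAy] using hy _ hc

theorem eq_zero_of_mem_interior_dom (hint : pb ∈ interior {q | ∃ x, A x + q ∈ K})
    (hy : ∀ z ∈ K, ⟪y, z - (A xb + pb)⟫ ≤ 0) (hAy : ContinuousLinearMap.adjoint A y = 0) :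
    y = 0 := by
  have hlim : Tendsto (pb + ·) (𝓝 (0 : E)) (𝓝 pb) := by
    simpa using (continuous_const_add pb).tendsto (0 : E)
  refine eq_zero_of_eventually_inner_nonpos ?_
  filter_upwards [hlim (mem_interior_iff_mem_nhds.1 hint)] with u ⟨x, hx⟩
  simpa [inner_apply_add_sub_eq_of_adjoint_eq_zero A hAy] using hy _ hx

variable [FiniteDimensional ℝ E] {s : Finset (E × ℝ)}

theorem exists_mem_tangCone_add_apply
    (hN : ∀ y, (∀ z ∈ polyhedron s, ⟪y, z - (A xb + pb)⟫ ≤ 0) →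
      ContinuousLinearMap.adjoint A y = 0 → y = 0)
    (hz : A xb + pb ∈ polyhedron s) (u : E) :
    ∃ w ∈ tangCone (polyhedron s) (A xb + pb), ∃ x, u = w + A x := by
  set M : PointedCone ℝ E :=
    linTangentCone s (A xb + pb) ⊔ PointedCone.ofSubmodule (LinearMap.range (A : F →ₗ[ℝ] E))
  have hM : M = ⊤ := by
    by_contra hM
    obtain ⟨y, hy0, hy⟩ := PointedCone.exists_inner_nonpos_of_ne_top hM
    exact hy0 (hN y (fun z hz => hy _ (Submodule.mem_sup_left (sub_mem_linTangentCone hz)))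
      (A.adjoint_eq_zero_of_forall_inner_apply_nonpos fun x =>
        hy _ (Submodule.mem_sup_right (LinearMap.mem_range_self _ x))))
  obtain ⟨w, hw, _, ⟨x, rfl⟩, hwx⟩ := Submodule.mem_sup.1 (hM ▸ Submodule.mem_top : u ∈ M)
  exact ⟨w, by rwa [tangCone_polyhedron hz], x, hwx.symm⟩

end LinearSystem

/-- Remark 2.3: for the solution mapping `S(q) = {x | Ax + q ∈ K}` of a
linear system with `K` a convex polyhedron, the Mordukhovich criterion
`D*S(p̄|x̄)(0) = {0}` holds iff `p̄ ∈ int(dom S)`, iff `N_K(Ax̄+p̄) ∩ ker Aᵀ = {0}`, iff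
`T_K(Ax̄+p̄) + range A = ℝᵐ`. -/
theorem mordukhovich_criterion_linear_system {n m : ℕ} (A : Eu n →L[ℝ] Eu m)
    (K : Set (Eu m)) (hK : IsPolyhedral K) (pb : Eu m) (xb : Eu n)
    (hgr : A xb + pb ∈ K) :
    (({xs : Eu m | (xs, (0 : Eu n)) ∈
        limNormalP (svGraph (fun q : Eu m => {x : Eu n | A x + q ∈ K}) univ) (pb, xb)}
          = {0}) ↔
      pb ∈ interior {q : Eu m | ∃ x : Eu n, A x + q ∈ K}) ∧
    (pb ∈ interior {q : Eu m | ∃ x : Eu n, A x + q ∈ K} ↔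
      {y : Eu m | (∀ z ∈ K, ⟪y, z - (A xb + pb)⟫ ≤ 0) ∧
        ContinuousLinearMap.adjoint A y = 0} = {0}) ∧
    ({y : Eu m | (∀ z ∈ K, ⟪y, z - (A xb + pb)⟫ ≤ 0) ∧
        ContinuousLinearMap.adjoint A y = 0} = {0} ↔
      ∀ z : Eu m, ∃ w ∈ tangCone K (A xb + pb), ∃ x : Eu n, z = w + A x) := by
  obtain ⟨s, hs⟩ := hK
  replace hs : K = polyhedron s := hs
  subst hs
  have hL : {xs : Eu m | (xs, (0 : Eu n)) ∈
      limNormalP (svGraph (fun q : Eu m => {x : Eu n | A x + q ∈ polyhedron s}) univ) (pb, xb)} =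
      {y | (∀ z ∈ polyhedron s, ⟪y, z - (A xb + pb)⟫ ≤ 0) ∧
        ContinuousLinearMap.adjoint A y = 0} :=
    ext fun y => mem_limNormalP_svGraph_linearSystem_iff A (convex_polyhedron s) hgr
  have hN : {y | (∀ z ∈ polyhedron s, ⟪y, z - (A xb + pb)⟫ ≤ 0) ∧
        ContinuousLinearMap.adjoint A y = 0} = {0} ↔
      ∀ y, (∀ z ∈ polyhedron s, ⟪y, z - (A xb + pb)⟫ ≤ 0) →
        ContinuousLinearMap.adjoint A y = 0 → y = 0 := by
    simp [eq_singleton_iff_unique_mem]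
  have hint := fun h => hN.2 fun y => eq_zero_of_mem_interior_dom A h
  have htan := fun h => exists_mem_tangCone_add_apply A (hN.1 h) hgr
  have hdom := mem_interior_dom_of_forall_exists_mem_tangCone_add_apply A hgr
  exact ⟨hL ▸ ⟨hdom ∘ htan, hint⟩, ⟨hint, hdom ∘ htan⟩, ⟨htan, hint ∘ hdom⟩⟩
end
end

section
/- Let S : ℝ² ⇉ ℝ² be the solution mapping of the linear complementarity problem S(q) = {x ∈ ℝ² | x ≥ 0, Mx + q ≥ 0, ⟨x, Mx + q⟩ = 0} with M = [[−1, 0], [1, 1]]. Then dom S = ℝ₊ × ℝ, and at (q̄, x̄) = (0, 0), S fails the ordinary Lipschitz-like property (indeed D*S(0 | 0)(0) ⊇ ℝ₋ × {0}), but S has the Lipschitz-like property relative to dom S at 0 for 0, with lip_{dom S} S(0 | 0) = √((3 + √5)/2). -/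
open Filter Metric Set
open scoped Topology RealInnerProductSpace

noncomputable section

/-!
For `q 0 ≥ 0` the complementarity conditions force `x 0 ∈ {0, q 0}` and then
`x 1 = max 0 (-(x 0 + q 1))`, so on `dom S` the solution map is the union of two selections.
The first is `1`-Lipschitz; the second is a `1`-Lipschitz map composed with
`(a, b) ↦ (a, a + b)`, whose norm is `√((3 + √5) / 2)`. Along a ray on which the second
selection is linear and moves in the top singular direction, while the first stays far away,
no smaller constant works. For `q 0 < 0` there are no solutions, which both destroys the
ordinary Lipschitz-like property at `0` and makes `ℝ₋ × {0}` normal to the graph.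
-/

section LipschitzLike

variable {E F : Type*} [NormedAddCommGroup E] [NormedAddCommGroup F]
  {S : E → Set F} {X : Set E} {x₀ : E} {u₀ : F} {κ : ℝ}

def HasLipschitzLikeBound (S : E → Set F) (X : Set E) (x₀ : E) (u₀ : F) (κ : ℝ) : Prop :=
  ∃ V ∈ 𝓝 x₀, ∃ W ∈ 𝓝 u₀, ∀ x ∈ X ∩ V, ∀ x' ∈ X ∩ V, ∀ u ∈ S x' ∩ W,
    ∃ u'' ∈ S x, ‖u - u''‖ ≤ κ * ‖x' - x‖

theorem lipschitzLikeRel_iff [NormedSpace ℝ E] [NormedSpace ℝ F] :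
    LipschitzLikeRel S X x₀ u₀ κ ↔
      LocallyClosedAt (svGraph S univ) (x₀, u₀) ∧ HasLipschitzLikeBound S X x₀ u₀ κ :=
  Iff.rfl

theorem gmod_eq_of_isLeast [NormedSpace ℝ E] [NormedSpace ℝ F] (hκ : 0 ≤ κ)
    (h : HasLipschitzLikeBound S X x₀ u₀ κ)
    (hmin : ∀ κ', HasLipschitzLikeBound S X x₀ u₀ κ' → κ ≤ κ') :
    gmod S X x₀ u₀ = κ := by
  refine le_antisymm (sInf_le ⟨κ, hκ, rfl, h⟩) (le_sInf ?_)
  rintro _ ⟨κ', -, rfl, h'⟩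
  exact EReal.coe_le_coe_iff.mpr (hmin κ' h')

theorem hasLipschitzLikeBound_of_selections {ι : Type*} {f : ι → E → F}
    (hS : ∀ x ∈ X, ∀ u, u ∈ S x ↔ ∃ i, f i x = u)
    (hf : ∀ i x x', ‖f i x' - f i x‖ ≤ κ * ‖x' - x‖) :
    HasLipschitzLikeBound S X x₀ u₀ κ := by
  refine ⟨univ, univ_mem, univ, univ_mem, ?_⟩
  rintro x ⟨hx, -⟩ x' ⟨hx', -⟩ u ⟨hu, -⟩
  obtain ⟨i, rfl⟩ := (hS x' hx' u).mp hu
  exact ⟨f i x, (hS x hx _).mpr ⟨i, rfl⟩, hf i x x'⟩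

theorem HasLipschitzLikeBound.eventually_nonempty (h : HasLipschitzLikeBound S X x₀ u₀ κ)
    (hx₀ : x₀ ∈ X) (hu₀ : u₀ ∈ S x₀) : ∀ᶠ x in 𝓝 x₀, x ∈ X → (S x).Nonempty := by
  obtain ⟨V, hV, W, hW, h⟩ := h
  filter_upwards [hV] with x hxV hx
  obtain ⟨u, hu, -⟩ := h x ⟨hx, hxV⟩ x₀ ⟨hx₀, mem_of_mem_nhds hV⟩ u₀ ⟨hu₀, mem_of_mem_nhds hW⟩
  exact ⟨u, hu⟩

theorem HasLipschitzLikeBound.le_of_tendsto {ι : Type*} {l : Filter ι} [l.NeBot] {x x' : ι → E}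
    {u : ι → F} {c : ℝ} (h : HasLipschitzLikeBound S X x₀ u₀ κ)
    (hx : Tendsto x l (𝓝 x₀)) (hx' : Tendsto x' l (𝓝 x₀)) (hu : Tendsto u l (𝓝 u₀))
    (hfar : ∀ᶠ i in l, x i ∈ X ∧ x' i ∈ X ∧ u i ∈ S (x' i) ∧ x i ≠ x' i ∧
      ∀ v ∈ S (x i), c * ‖x' i - x i‖ ≤ ‖u i - v‖) :
    c ≤ κ := by
  obtain ⟨V, hV, W, hW, h⟩ := h
  obtain ⟨i, hxV, hx'V, huW, hxX, hx'X, huS, hne, hfar⟩ :=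
    ((hx.eventually_mem hV).and ((hx'.eventually_mem hV).and
      ((hu.eventually_mem hW).and hfar))).exists
  obtain ⟨v, hv, hle⟩ := h (x i) ⟨hxX, hxV⟩ (x' i) ⟨hx'X, hx'V⟩ (u i) ⟨huS, huW⟩
  have hpos : 0 < ‖x' i - x i‖ := norm_pos_iff.mpr (sub_ne_zero.mpr hne.symm)
  exact le_of_mul_le_mul_right ((hfar v hv).trans hle) hpos

theorem not_lipschitzLikeRel_of_frequently_empty [NormedSpace ℝ E] [NormedSpace ℝ F]
    (hx₀ : x₀ ∈ X) (hu₀ : u₀ ∈ S x₀) (h : ∃ᶠ x in 𝓝 x₀, x ∈ X ∧ S x = ∅) :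
    ¬ LipschitzLikeRel S X x₀ u₀ κ := fun hS => by
  obtain ⟨x, ⟨hx, hempty⟩, hne⟩ :=
    (h.and_eventually
      ((lipschitzLikeRel_iff.mp hS).2.eventually_nonempty hx₀ hu₀)).exists
  exact (hne hx).ne_empty hempty

end LipschitzLike

section Normals

variable {E F : Type*} [NormedAddCommGroup E] [InnerProductSpace ℝ E]
  [NormedAddCommGroup F] [InnerProductSpace ℝ F]

theorem mem_regNormalP_of_inner_nonpos {A : Set (E × F)} {a v : E × F}
    (hv : ∀ b ∈ A, ⟪v.1, b.1 - a.1⟫ + ⟪v.2, b.2 - a.2⟫ ≤ 0) : v ∈ regNormalP A a :=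
  fun ε hε => ⟨1, one_pos, fun b hb _ => (hv b hb).trans (by positivity)⟩

theorem mem_limNormalP_of_mem_regNormalP {A : Set (E × F)} {a v : E × F} (ha : a ∈ A)
    (hv : v ∈ regNormalP A a) : v ∈ limNormalP A a :=
  ⟨fun _ => a, fun _ => v, fun _ => ha, fun _ => hv, tendsto_const_nhds, tendsto_const_nhds⟩

theorem mem_coderiv_zero_of_inner_nonpos {S : E → Set F} {x₀ : E} {u₀ : F} {v : E}
    (hu₀ : u₀ ∈ S x₀) (hv : ∀ x, (S x).Nonempty → ⟪v, x - x₀⟫ ≤ 0) :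
    v ∈ coderiv S x₀ u₀ 0 := by
  refine mem_limNormalP_of_mem_regNormalP ⟨mem_univ _, hu₀⟩
    (mem_regNormalP_of_inner_nonpos fun b hb => ?_)
  simpa using hv b.1 ⟨b.2, hb.2⟩

end Normals

theorem tendsto_smul_const_nhdsGT_zero_s18 {E : Type*} [NormedAddCommGroup E] [NormedSpace ℝ E]
    (a : E) : Tendsto (fun s : ℝ => s • a) (𝓝[>] 0) (𝓝 0) := by
  simpa using ((tendsto_id (x := 𝓝 (0 : ℝ))).mono_left nhdsWithin_le_nhds).smul_const a

theorem norm_sq_eu2 (x : Eu 2) : ‖x‖ ^ 2 = x 0 ^ 2 + x 1 ^ 2 := by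
  simp [EuclideanSpace.real_norm_sq_eq, Fin.sum_univ_two]

theorem sq_max_zero_neg_sub_le (a b : ℝ) : (max 0 (-a) - max 0 (-b)) ^ 2 ≤ (a - b) ^ 2 := by
  rw [sq_le_sq, max_comm, max_comm 0]
  exact (abs_max_sub_max_le_abs _ _ _).trans (by rw [neg_sub_neg, abs_sub_comm])

theorem sq_add_sq_add_le (a b : ℝ) : a ^ 2 + (a + b) ^ 2 ≤ (3 + √5) / 2 * (a ^ 2 + b ^ 2) := by
  have h5 : √5 ^ 2 = 5 := Real.sq_sqrt (by norm_num)
  have h1 : 0 < √5 - 1 := by nlinarith [Real.sqrt_nonneg 5]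
  have key : 2 * (√5 - 1) * ((3 + √5) / 2 * (a ^ 2 + b ^ 2) - (a ^ 2 + (a + b) ^ 2)) =
      ((√5 - 1) * a - 2 * b) ^ 2 := by
    linear_combination b ^ 2 * h5
  nlinarith [sq_nonneg ((√5 - 1) * a - 2 * b)]

theorem complementarity_iff_eq_max (x c : ℝ) :
    (0 ≤ x ∧ 0 ≤ x + c ∧ x * (x + c) = 0) ↔ x = max 0 (-c) := by
  constructor
  · rintro ⟨hx, hxc, h⟩
    rcases mul_eq_zero.mp h with h | h
    · rw [h, max_eq_left (by linarith)]
    · rw [max_eq_right (by linarith)]; linarith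
  · rintro rfl
    rcases le_total c 0 with hc | hc
    · rw [max_eq_right (by linarith)]; refine ⟨by linarith, by linarith, by ring⟩
    · rw [max_eq_left (by linarith)]; refine ⟨le_rfl, by linarith, by ring⟩

def lcpSol (q : Eu 2) : Set (Eu 2) :=
  {x : Eu 2 | 0 ≤ x 0 ∧ 0 ≤ x 1 ∧ 0 ≤ -x 0 + q 0 ∧ 0 ≤ x 0 + x 1 + q 1 ∧
    x 0 * (-x 0 + q 0) + x 1 * (x 0 + x 1 + q 1) = 0}

def lcpSel₁ (q : Eu 2) : Eu 2 := !₂[0, max 0 (-q 1)]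

def lcpSel₂ (q : Eu 2) : Eu 2 := !₂[q 0, max 0 (-(q 0 + q 1))]

theorem lcpSol_eq_empty {q : Eu 2} (hq : q 0 < 0) : lcpSol q = ∅ :=
  eq_empty_of_forall_notMem fun _ ⟨h₀, _, h₁, _⟩ => by linarith

theorem mem_lcpSol_iff {q : Eu 2} (hq : 0 ≤ q 0) (x : Eu 2) :
    x ∈ lcpSol q ↔ x = lcpSel₁ q ∨ x = lcpSel₂ q := by
  constructor
  · rintro ⟨h₀, h₁, h₂, h₃, h₄⟩
    have hx₀ : x 0 * (-x 0 + q 0) = 0 := by nlinarith [mul_nonneg h₀ h₂, mul_nonneg h₁ h₃]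
    have hx₁ : x 1 = max 0 (-(x 0 + q 1)) :=
      (complementarity_iff_eq_max _ _).mp ⟨h₁, by linarith, by linarith⟩
    rcases mul_eq_zero.mp hx₀ with h | h
    · left; ext i; fin_cases i <;> simp [lcpSel₁, h, hx₁]
    · have h : x 0 = q 0 := by linarith
      right; ext i; fin_cases i <;> simp [lcpSel₂, hx₁, h]
  · rintro (rfl | rfl)
    · obtain ⟨h₁, h₂, h₃⟩ := (complementarity_iff_eq_max (max 0 (-q 1)) (q 1)).mpr rfl
      simp only [lcpSol, lcpSel₁, mem_ofPred_eq, Matrix.cons_val_zero, Matrix.cons_val_one,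
        Matrix.cons_val_fin_one]
      exact ⟨le_rfl, h₁, by linarith, by linarith, by linear_combination h₃⟩
    · obtain ⟨h₁, h₂, h₃⟩ :=
        (complementarity_iff_eq_max (max 0 (-(q 0 + q 1))) (q 0 + q 1)).mpr rfl
      simp only [lcpSol, lcpSel₂, mem_ofPred_eq, Matrix.cons_val_zero, Matrix.cons_val_one,
        Matrix.cons_val_fin_one]
      exact ⟨hq, h₁, by linarith, by linarith, by linear_combination h₃⟩

theorem lcpSol_nonempty_iff (q : Eu 2) : (lcpSol q).Nonempty ↔ 0 ≤ q 0 := by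
  refine ⟨fun h => not_lt.mp fun hq => (lcpSol_eq_empty hq ▸ h).ne_empty rfl,
    fun hq => ⟨lcpSel₁ q, (mem_lcpSol_iff hq _).mpr (Or.inl rfl)⟩⟩

theorem zero_mem_lcpSol : (0 : Eu 2) ∈ lcpSol 0 := by
  simp [lcpSol]

theorem isClosed_graph_lcpSol : IsClosed (svGraph lcpSol univ) := by
  simp only [svGraph, lcpSol, mem_univ, true_and, ofPred_and]
  refine ((isClosed_le ?_ ?_).inter ((isClosed_le ?_ ?_).inter ((isClosed_le ?_ ?_).inter
    ((isClosed_le ?_ ?_).inter (isClosed_eq ?_ ?_))))) <;> fun_prop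

theorem lcpSel₁_smul {s : ℝ} (hs : 0 ≤ s) (q : Eu 2) : lcpSel₁ (s • q) = s • lcpSel₁ q := by
  ext i; fin_cases i <;> simp [lcpSel₁, mul_max_of_nonneg _ _ hs]

theorem lcpSel₂_smul {s : ℝ} (hs : 0 ≤ s) (q : Eu 2) : lcpSel₂ (s • q) = s • lcpSel₂ q := by
  ext i; fin_cases i <;> simp [lcpSel₂, mul_max_of_nonneg _ _ hs, mul_add]

theorem norm_lcpSel₁_sub_le (q q' : Eu 2) :
    ‖lcpSel₁ q' - lcpSel₁ q‖ ≤ √((3 + √5) / 2) * ‖q' - q‖ := by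
  rw [← pow_le_pow_iff_left₀ (norm_nonneg _) (by positivity) two_ne_zero, mul_pow,
    Real.sq_sqrt (by positivity), norm_sq_eu2, norm_sq_eu2]
  have := sq_max_zero_neg_sub_le (q' 1) (q 1)
  simp only [lcpSel₁, PiLp.sub_apply, Matrix.cons_val_zero, Matrix.cons_val_one,
    Matrix.cons_val_fin_one]
  nlinarith [sq_nonneg (q' 0 - q 0), sq_nonneg (q' 1 - q 1), Real.sqrt_nonneg 5]

theorem norm_lcpSel₂_sub_le (q q' : Eu 2) :
    ‖lcpSel₂ q' - lcpSel₂ q‖ ≤ √((3 + √5) / 2) * ‖q' - q‖ := by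
  rw [← pow_le_pow_iff_left₀ (norm_nonneg _) (by positivity) two_ne_zero, mul_pow,
    Real.sq_sqrt (by positivity), norm_sq_eu2, norm_sq_eu2]
  have h₁ := sq_max_zero_neg_sub_le (q' 0 + q' 1) (q 0 + q 1)
  have h₂ := sq_add_sq_add_le (q' 0 - q 0) (q' 1 - q 1)
  simp only [lcpSel₂, PiLp.sub_apply, Matrix.cons_val_zero, Matrix.cons_val_one,
    Matrix.cons_val_fin_one]
  linarith

theorem hasLipschitzLikeBound_lcpSol :
    HasLipschitzLikeBound lcpSol {q | 0 ≤ q 0} 0 0 √((3 + √5) / 2) :=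
  hasLipschitzLikeBound_of_selections (f := ![lcpSel₁, lcpSel₂])
    (fun q hq x => by rw [mem_lcpSol_iff hq, Fin.exists_fin_two]; simp [eq_comm])
    (fun i q q' => by fin_cases i; exacts [norm_lcpSel₁_sub_le q q', norm_lcpSel₂_sub_le q q'])

-- `!₂[2, √5 - 1]` is the top singular direction of `(a, b) ↦ (a, -(a + b))`, the linear part
-- of `lcpSel₂` where `q 0 + q 1 < 0`; `!₂[4, -8]` keeps `lcpSel₁` farther away.
theorem modulus_mul_norm_le_norm_lcpSel₂_sub {v : Eu 2} (hv : v ∈ lcpSol !₂[4, -8]) :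
    √((3 + √5) / 2) * ‖!₂[6, √5 - 9] - !₂[4, -8]‖ ≤ ‖lcpSel₂ !₂[6, √5 - 9] - v‖ := by
  have h5 : √5 ^ 2 = 5 := Real.sq_sqrt (by norm_num)
  have h53 : √5 < 3 := by nlinarith [Real.sqrt_nonneg 5]
  rw [← pow_le_pow_iff_left₀ (by positivity) (norm_nonneg _) two_ne_zero, mul_pow,
    Real.sq_sqrt (by positivity), norm_sq_eu2, norm_sq_eu2]
  have hmax : max 0 (9 - √5 + -6) = 3 - √5 := by rw [max_eq_right (by linarith)]; ring
  rcases (mem_lcpSol_iff (by norm_num) v).mp hv with rfl | rfl <;>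
    norm_num [lcpSel₁, lcpSel₂, hmax] <;> nlinarith

theorem HasLipschitzLikeBound.modulus_le_lcpSol {κ : ℝ}
    (h : HasLipschitzLikeBound lcpSol {q | 0 ≤ q 0} 0 0 κ) : √((3 + √5) / 2) ≤ κ := by
  have hq : (0 : ℝ) ≤ (!₂[4, -8] : Eu 2) 0 := by norm_num
  have hq' : (0 : ℝ) ≤ (!₂[6, √5 - 9] : Eu 2) 0 := by norm_num
  refine h.le_of_tendsto (tendsto_smul_const_nhdsGT_zero_s18 !₂[4, -8])
    (tendsto_smul_const_nhdsGT_zero_s18 !₂[6, √5 - 9])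
    (tendsto_smul_const_nhdsGT_zero_s18 (lcpSel₂ !₂[6, √5 - 9])) ?_
  filter_upwards [self_mem_nhdsWithin] with s (hs : 0 < s)
  have hsmul : ∀ q : Eu 2, 0 ≤ q 0 → 0 ≤ (s • q) 0 := fun q hq => by
    simpa only [PiLp.smul_apply, smul_eq_mul] using mul_nonneg hs.le hq
  have hfar : ∀ w ∈ lcpSol !₂[4, -8], √((3 + √5) / 2) * ‖s • !₂[6, √5 - 9] - s • !₂[4, -8]‖ ≤
      ‖s • lcpSel₂ !₂[6, √5 - 9] - s • w‖ := fun w hw => by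
    rw [← smul_sub, ← smul_sub, norm_smul, norm_smul, mul_left_comm]
    exact mul_le_mul_of_nonneg_left (modulus_mul_norm_le_norm_lcpSel₂_sub hw) (norm_nonneg s)
  refine ⟨hsmul _ hq, hsmul _ hq', ?_, ?_, fun v hv => ?_⟩
  · rw [← lcpSel₂_smul hs.le]
    exact (mem_lcpSol_iff (hsmul _ hq') _).mpr (Or.inr rfl)
  · refine (smul_right_injective _ hs.ne').ne fun h => ?_
    have := congrArg (· 0) h
    norm_num at this
  · rcases (mem_lcpSol_iff (hsmul _ hq) v).mp hv with rfl | rfl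
    · rw [lcpSel₁_smul hs.le]
      exact hfar _ ((mem_lcpSol_iff hq _).mpr (Or.inl rfl))
    · rw [lcpSel₂_smul hs.le]
      exact hfar _ ((mem_lcpSol_iff hq _).mpr (Or.inr rfl))

theorem frequently_lcpSol_eq_empty : ∃ᶠ q in 𝓝 (0 : Eu 2), q ∈ univ ∧ lcpSol q = ∅ :=
  (tendsto_smul_const_nhdsGT_zero_s18 !₂[-1, 0]).frequently <| Eventually.frequently <| by
    filter_upwards [self_mem_nhdsWithin] with s (hs : 0 < s)
    exact ⟨mem_univ _, lcpSol_eq_empty (by simpa using hs)⟩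

theorem subset_coderiv_lcpSol : {v : Eu 2 | v 0 ≤ 0 ∧ v 1 = 0} ⊆ coderiv lcpSol 0 0 0 := by
  rintro v ⟨hv₀, hv₁⟩
  refine mem_coderiv_zero_of_inner_nonpos zero_mem_lcpSol fun q hq => ?_
  have := (lcpSol_nonempty_iff q).mp hq
  simpa [PiLp.inner_apply, Fin.sum_univ_two, hv₁] using mul_nonpos_of_nonneg_of_nonpos this hv₀

/-- Example 2.1: for the solution mapping of the linear complementarity
problem with `M = [[-1, 0], [1, 1]]`, one has `dom S = ℝ₊ × ℝ`; at `(q̄, x̄) = (0, 0)` the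
ordinary Lipschitz-like property fails (indeed `D*S(0|0)(0) ⊇ ℝ₋ × {0}`), but `S` has the
Lipschitz-like property relative to `dom S`, with modulus `√((3 + √5)/2)`. -/
theorem lcp_example (S : Eu 2 → Set (Eu 2))
    (hS : S = fun q : Eu 2 => {x : Eu 2 |
      0 ≤ x 0 ∧ 0 ≤ x 1 ∧ 0 ≤ -x 0 + q 0 ∧ 0 ≤ x 0 + x 1 + q 1 ∧
      x 0 * (-x 0 + q 0) + x 1 * (x 0 + x 1 + q 1) = 0}) :
    {q : Eu 2 | (S q).Nonempty} = {q : Eu 2 | 0 ≤ q 0} ∧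
    (¬ ∃ κ : ℝ, 0 ≤ κ ∧ LipschitzLikeRel S univ 0 0 κ) ∧
    {v : Eu 2 | v 0 ≤ 0 ∧ v 1 = 0} ⊆ coderiv S 0 0 0 ∧
    (∃ κ : ℝ, 0 ≤ κ ∧ LipschitzLikeRel S {q : Eu 2 | 0 ≤ q 0} 0 0 κ) ∧
    gmod S {q : Eu 2 | 0 ≤ q 0} 0 0 =
      ((Real.sqrt ((3 + Real.sqrt 5) / 2) : ℝ) : EReal) := by
  obtain rfl : S = lcpSol := hS
  have hclosed : LocallyClosedAt (svGraph lcpSol univ) (0, 0) :=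
    ⟨univ, univ_mem, by rw [inter_univ]; exact isClosed_graph_lcpSol⟩
  refine ⟨ext lcpSol_nonempty_iff, ?_, subset_coderiv_lcpSol,
    ⟨_, Real.sqrt_nonneg _, lipschitzLikeRel_iff.mpr ⟨hclosed, hasLipschitzLikeBound_lcpSol⟩⟩,
    gmod_eq_of_isLeast (Real.sqrt_nonneg _) hasLipschitzLikeBound_lcpSol
      fun _ h => h.modulus_le_lcpSol⟩
  rintro ⟨κ, -, h⟩
  exact not_lipschitzLikeRel_of_frequently_empty (mem_univ 0) zero_mem_lcpSol
    frequently_lcpSol_eq_empty h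
end
end

section
/- Let f : ℝⁿ → ℝ ∪ {+∞} be finite and locally lsc at x̄, and X ⊆ dom f closed and convex with x̄ ∈ X. If f is locally Lipschitz continuous at x̄ relative to X, then for all x ∈ X sufficiently close to x̄, the horizon subdifferential of f + δ_X at x is contained in the normal cone to X at x: ∂^∞(f + δ_X)(x) ⊆ N_X(x). -/
open Filter Metric Set Classical
open scoped Topology RealInnerProductSpace

noncomputable section

/-! On `X`, near `x̄`, the function `f` is finite and `K`-Lipschitz, and `f + δ_X` is `+∞` off `X`.
Testing a regular subgradient `v` of `f + δ_X` at `x ∈ X` along the segment from `x` to `y ∈ X`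
(which stays in `X` by convexity) gives `⟪v, y - x⟫ ≤ K ‖y - x‖`. For a horizon subgradient the
points `x_k` eventually lie in `X` (the values `f x_k` converge to the finite `f x`), so after
scaling by `λ_k → 0` the bound becomes `⟪v, y - x⟫ ≤ 0` in the limit. -/

open scoped NNReal

theorem eabsdiff_coe_coe (a b : ℝ) : eabsdiff a b = ((|a - b| : ℝ) : EReal) := by
  rw [eabsdiff, ← EReal.coe_sub, ← EReal.coe_sub, abs_eq_max_neg, neg_sub]
  exact (EReal.coe_strictMono.monotone.map_max).symm

theorem coe_toReal_of_eabsdiff_le {a : EReal} {b c : ℝ} (h : eabsdiff a b ≤ c) :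
    ((a.toReal : ℝ) : EReal) = a := by
  obtain ⟨h₁, h₂⟩ := max_le_iff.mp h
  refine EReal.coe_toReal (fun ha => ?_) (fun ha => ?_)
  · rw [ha, EReal.top_sub_coe] at h₁
    exact (EReal.coe_lt_top c).not_ge h₁
  · rw [ha, EReal.coe_sub_bot] at h₂
    exact (EReal.coe_lt_top c).not_ge h₂

section Normed

variable {E : Type*} [NormedAddCommGroup E]

theorem RelLipschitzAt.exists_lipschitzOnWith_toReal {f : E → EReal} {X : Set E} {x₀ : E}
    {r : ℝ} (hlip : RelLipschitzAt f X x₀) (hx₀ : x₀ ∈ X) (hr : f x₀ = r) :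
    ∃ K : ℝ≥0, ∃ U, IsOpen U ∧ x₀ ∈ U ∧ (∀ z ∈ X ∩ U, f z = (f z).toReal) ∧
      LipschitzOnWith K (fun z => (f z).toReal) (X ∩ U) := by
  obtain ⟨κ, hκ, V, hV, hκV⟩ := hlip
  have hfin : ∀ z ∈ X ∩ V, ((f z).toReal : EReal) = f z := fun z hz =>
    coe_toReal_of_eabsdiff_le (hr ▸ hκV z hz x₀ ⟨hx₀, mem_of_mem_nhds hV⟩)
  have hsub : X ∩ interior V ⊆ X ∩ V := inter_subset_inter_right X interior_subset
  refine ⟨κ.toNNReal, interior V, isOpen_interior, mem_interior_iff_mem_nhds.2 hV,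
    fun z hz => (hfin z (hsub hz)).symm, LipschitzOnWith.of_dist_le_mul fun z hz w hw => ?_⟩
  have h := hκV z (hsub hz) w (hsub hw)
  rw [← hfin z (hsub hz), ← hfin w (hsub hw), eabsdiff_coe_coe, EReal.coe_le_coe_iff] at h
  rwa [Real.dist_eq, dist_eq_norm, Real.coe_toNNReal _ hκ]

variable [NormedSpace ℝ E]

theorem Convex.eventually_add_smul_sub_mem_inter {X U : Set E} (hX : Convex ℝ X)
    (hU : IsOpen U) {x y : E} (hx : x ∈ X ∩ U) (hy : y ∈ X) :
    ∀ᶠ t in 𝓝[>] (0 : ℝ), x + t • (y - x) ∈ X ∩ U := by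
  have hXt : ∀ᶠ t in 𝓝[>] (0 : ℝ), x + t • (y - x) ∈ X :=
    eventually_of_mem (Ioc_mem_nhdsGT one_pos) fun t ht =>
      hX.add_smul_sub_mem hx.1 hy ⟨ht.1.le, ht.2⟩
  have hpath : Tendsto (fun t : ℝ => x + t • (y - x)) (𝓝 0) (𝓝 x) :=
    (by fun_prop : Continuous fun t : ℝ => x + t • (y - x)).tendsto' 0 x (by simp)
  exact hXt.and (nhdsWithin_le_nhds (hpath (hU.mem_nhds hx.2)))

end Normed

section InnerProduct

variable {E : Type*} [NormedAddCommGroup E] [InnerProductSpace ℝ E]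

theorem inner_le_of_mem_regSubdiff {g : E → EReal} {x v d : E} {a c : ℝ}
    (hv : v ∈ regSubdiff g x) (hx : g x = a)
    (hgrowth : ∀ᶠ t in 𝓝[>] (0 : ℝ), g (x + t • d) ≤ ((a + c * t : ℝ) : EReal)) :
    ⟪v, d⟫ ≤ c := by
  refine le_of_forall_pos_le_add fun ε hε => ?_
  set ε' := ε / (‖d‖ + 1)
  obtain ⟨δ, hδ, hsub⟩ := hv ε' (by positivity)
  have hsmall : ∀ᶠ t in 𝓝[>] (0 : ℝ), t * ‖d‖ ≤ δ := by
    have : Tendsto (fun t : ℝ => t * ‖d‖) (𝓝 0) (𝓝 0) :=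
      (by fun_prop : Continuous fun t : ℝ => t * ‖d‖).tendsto' 0 0 (zero_mul _)
    exact nhdsWithin_le_nhds ((this.eventually (gt_mem_nhds hδ)).mono fun _ => le_of_lt)
  obtain ⟨t, (ht : 0 < t), htδ, hgt⟩ :=
    (eventually_mem_nhdsWithin.and (hsmall.and hgrowth)).exists
  have hnorm : ‖x + t • d - x‖ = t * ‖d‖ := by
    rw [add_sub_cancel_left, norm_smul, Real.norm_of_nonneg ht.le]
  have h := (hsub (x + t • d) (hnorm ▸ htδ)).trans hgt
  rw [hx, ← EReal.coe_add, EReal.coe_le_coe_iff, hnorm, add_sub_cancel_left,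
    real_inner_smul_right] at h
  have hε' : ε' * ‖d‖ ≤ ε := by
    rw [div_mul_eq_mul_div, div_le_iff₀ (by positivity)]
    nlinarith [norm_nonneg d]
  have h' : t * ⟪v, d⟫ ≤ t * (c + ε' * ‖d‖) := by linarith
  linarith [le_of_mul_le_mul_left h' ht]

theorem inner_le_of_mem_regSubdiff_of_lipschitzOnWith {X U : Set E} {g : E → EReal}
    {φ : E → ℝ} {K : ℝ≥0} (hX : Convex ℝ X) (hU : IsOpen U)
    (hφ : LipschitzOnWith K φ (X ∩ U)) (hg : ∀ z ∈ X ∩ U, g z = φ z) {x v y : E}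
    (hx : x ∈ X ∩ U) (hv : v ∈ regSubdiff g x) (hy : y ∈ X) :
    ⟪v, y - x⟫ ≤ K * ‖y - x‖ := by
  refine inner_le_of_mem_regSubdiff hv (hg x hx) ?_
  filter_upwards [hX.eventually_add_smul_sub_mem_inter hU hx hy, self_mem_nhdsWithin]
    with t hz (ht : 0 < t)
  rw [hg _ hz, EReal.coe_le_coe_iff]
  have h := hφ.dist_le_mul _ hz _ hx
  rw [Real.dist_eq, dist_eq_norm, add_sub_cancel_left, norm_smul,
    Real.norm_of_nonneg ht.le] at h
  nlinarith [le_abs_self (φ (x + t • (y - x)) - φ x)]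

theorem horizonSubdiff_indicator_subset_normalCone {X U : Set E} {f : E → EReal}
    {φ : E → ℝ} {K : ℝ≥0} (hX : Convex ℝ X) (hU : IsOpen U)
    (hφ : LipschitzOnWith K φ (X ∩ U)) (hf : ∀ z ∈ X ∩ U, f z = φ z) {x : E}
    (hx : x ∈ X ∩ U) :
    horizonSubdiff (fun y => if y ∈ X then f y else ⊤) x ⊆
      {v | ∀ y ∈ X, ⟪v, y - x⟫ ≤ 0} := by
  set g : E → EReal := fun y => if y ∈ X then f y else ⊤
  have hg : ∀ z ∈ X ∩ U, g z = φ z := fun z hz => (if_pos hz.1).trans (hf z hz)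
  rintro v ⟨xk, vk, lk, hxk, hgk, hlk, hlk0, hvk, hlv⟩ y hy
  have hkX : ∀ᶠ k in atTop, xk k ∈ X := by
    have hfin : ∀ᶠ k in atTop, g (xk k) < ⊤ :=
      hgk.eventually (gt_mem_nhds (by rw [hg x hx]; exact EReal.coe_lt_top _))
    filter_upwards [hfin] with k hk
    by_contra h
    simp [g, h] at hk
  have hbound : ∀ᶠ k in atTop, ⟪lk k • vk k, y - xk k⟫ ≤ lk k * (K * ‖y - xk k‖) := by
    filter_upwards [hkX, hxk.eventually (hU.mem_nhds hx.2)] with k hkX hkU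
    rw [real_inner_smul_left]
    exact mul_le_mul_of_nonneg_left
      (inner_le_of_mem_regSubdiff_of_lipschitzOnWith hX hU hφ hg ⟨hkX, hkU⟩ (hvk k) hy)
      (hlk k).le
  have hlim : Tendsto (fun k => lk k * (K * ‖y - xk k‖)) atTop (𝓝 0) := by
    simpa using hlk0.mul ((tendsto_const_nhds.sub hxk).norm.const_mul (K : ℝ))
  exact le_of_tendsto_of_tendsto (hlv.inner (tendsto_const_nhds.sub hxk)) hlim hbound

end InnerProduct

theorem horizonSubdiff_subset_normalCone_general {n : ℕ} (f : Eu n → EReal) (X : Set (Eu n))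
    (xb : Eu n) (r : ℝ) (hfin : f xb = (r : EReal))
    (hXconv : Convex ℝ X) (hxb : xb ∈ X)
    (hlip : RelLipschitzAt f X xb) :
    ∀ᶠ x in 𝓝 xb, x ∈ X →
      horizonSubdiff (fun y => if y ∈ X then f y else ⊤) x ⊆
        {v : Eu n | ∀ y ∈ X, ⟪v, y - x⟫ ≤ 0} := by
  obtain ⟨K, U, hU, hxbU, hfU, hφ⟩ := hlip.exists_lipschitzOnWith_toReal hxb hfin
  filter_upwards [hU.mem_nhds hxbU] with x hxU hxX
  exact horizonSubdiff_indicator_subset_normalCone hXconv hU hφ hfU ⟨hxX, hxU⟩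

/-- Theorem 3.2 (i): if `f` is locally Lipschitz continuous at `x̄`
relative to a closed convex set `X ⊆ dom f`, then for all `x ∈ X` close enough to `x̄`,
the horizon subdifferential of `f + δ_X` at `x` is contained in the normal cone to `X`
at `x`. -/
theorem horizonSubdiff_subset_normalCone {n : ℕ} (f : Eu n → EReal) (X : Set (Eu n))
    (xb : Eu n) (r : ℝ) (hfin : f xb = (r : EReal))
    (hlsc : LocallyClosedAt {p : Eu n × ℝ | f p.1 ≤ (p.2 : EReal)} (xb, r))
    (hX : IsClosed X) (hXconv : Convex ℝ X) (hXdom : X ⊆ {x | f x < ⊤}) (hxb : xb ∈ X)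
    (hlip : RelLipschitzAt f X xb) :
    ∀ᶠ x in 𝓝 xb, x ∈ X →
      horizonSubdiff (fun y => if y ∈ X then f y else ⊤) x ⊆
        {v : Eu n | ∀ y ∈ X, ⟪v, y - x⟫ ≤ 0} :=
  horizonSubdiff_subset_normalCone_general f X xb r hfin hXconv hxb hlip
end
end
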